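/- arXiv:2009.04900 — 5 statements merged into one kernel-verified Lean document; each statement's English description precedes it below -/
import Mathlib

section
/- Let P_{S2}(x) = 1 + Σ_{n≥1} |L_{S2}(n)| xⁿ be the formal power series in x over ℚ counting the paths in L_{S2}(n). Then 8x·P_{S2}(x) = 1 + 3x − √(1 − 10x + 9x²), where the square root denotes the unique formal power series with constant term 1 whose square is 1 − 10x + 9x². -/
/-!
Cutting a nonempty path at its first return to the axis writes it uniquely as a primitive path
followed by an arbitrary path, so `P = 1 + x Q P` where `x Q` counts the primitive paths.
A primitive path of semilength `n + 1` is an arch `(r, r) m (u, -u)` whose interior `m` stays at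
height at least one. Shortening its first and last steps by one unit (dropping a step that shrinks
to length zero) and recording in two bits whether each of them survives is a bijection onto pairs
of bits and paths of semilength `n` when `n ≥ 1`, while for `n = 0` there is a single arch.
Hence `Q = 4P - 3`, so `(1 + 3x) P = 1 + 4x P²` and `(1 + 3x - 8xP)² = 1 - 10x + 9x²`;
the constant terms single out the square root with constant term `1`.
-/

/-- A lattice path from `(0,0)` to `(2n,0)` with steps in `S` that never goes
below the x-axis, encoded as the list of its steps. -/
def IsPath (S : Set (ℤ × ℤ)) (n : ℕ) (p : List (ℤ × ℤ)) : Prop :=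
  (∀ s ∈ p, s ∈ S) ∧
  (p.map Prod.fst).sum = 2 * n ∧
  (p.map Prod.snd).sum = 0 ∧
  ∀ q : List (ℤ × ℤ), q <+: p → 0 ≤ (q.map Prod.snd).sum

def S1 : Set (ℤ × ℤ) := {(1, 1), (1, -1)}
def S2 : Set (ℤ × ℤ) := {s | ∃ r : ℤ, 0 < r ∧ (s = (r, r) ∨ s = (r, -r))}
def S3 : Set (ℤ × ℤ) := {(1, 1), (1, -1), (2, 0)}
def S4 : Set (ℤ × ℤ) := {s | ∃ r : ℤ, 0 < r ∧ (s = (r, r) ∨ s = (r, -r) ∨ s = (2 * r, 0))}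
def S5 : Set (ℤ × ℤ) := {s | s = (1, 1) ∨ s = (1, -1) ∨ ∃ r : ℤ, 0 < r ∧ s = (2 * r, 0)}
def S6 : Set (ℤ × ℤ) := {s | (∃ r : ℤ, 0 < r ∧ (s = (r, r) ∨ s = (r, -r))) ∨ s = (2, 0)}

/-- Number of runs: vertices lying between two consecutive steps of the same kind. -/
def runs (p : List (ℤ × ℤ)) : ℕ :=
  (p.zip p.tail).countP (fun q => q.1 == q.2)

/-- Number of diagonal runs: vertices between two consecutive equal non-horizontal steps. -/
def dr (p : List (ℤ × ℤ)) : ℕ :=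
  (p.zip p.tail).countP (fun q => q.1 == q.2 && q.1.2 != 0)

/-- Number of horizontal runs: vertices between two consecutive horizontal steps. -/
def hr (p : List (ℤ × ℤ)) : ℕ :=
  (p.zip p.tail).countP (fun q => q.1 == q.2 && q.1.2 == 0)

/-- The path has no horizontal step lying on the x-axis. -/
def NoFlatOnAxis (p : List (ℤ × ℤ)) : Prop :=
  ∀ q s, q ++ [s] <+: p → s.2 = 0 → (q.map Prod.snd).sum ≠ 0

open Finset PowerSeries

namespace S2Path

def height (p : List (ℤ × ℤ)) : ℤ := (p.map Prod.snd).sum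

def width (p : List (ℤ × ℤ)) : ℤ := (p.map Prod.fst).sum

@[simp] lemma height_nil : height [] = 0 := rfl

@[simp] lemma height_cons (s : ℤ × ℤ) (p : List (ℤ × ℤ)) : height (s :: p) = s.2 + height p := by
  simp [height]

@[simp] lemma height_append (p q : List (ℤ × ℤ)) : height (p ++ q) = height p + height q := by
  simp [height]

@[simp] lemma width_nil : width [] = 0 := rfl

@[simp] lemma width_cons (s : ℤ × ℤ) (p : List (ℤ × ℤ)) : width (s :: p) = s.1 + width p := by
  simp [width]

@[simp] lemma width_append (p q : List (ℤ × ℤ)) : width (p ++ q) = width p + width q := by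
  simp [width]

lemma mem_S2_iff {s : ℤ × ℤ} : s ∈ S2 ↔ 0 < s.1 ∧ (s.2 = s.1 ∨ s.2 = -s.1) := by
  constructor
  · rintro ⟨r, hr, rfl | rfl⟩ <;> simp [hr]
  · obtain ⟨a, b⟩ := s
    rintro ⟨ha, h | h⟩ <;> dsimp only at ha h <;> rw [h]
    exacts [⟨a, ha, .inl rfl⟩, ⟨a, ha, .inr rfl⟩]

@[simp] lemma up_mem_S2 {r : ℤ} : (r, r) ∈ S2 ↔ 0 < r := by simp [mem_S2_iff]

@[simp] lemma down_mem_S2 {r : ℤ} : (r, -r) ∈ S2 ↔ 0 < r := by simp [mem_S2_iff]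

lemma length_le_width {p : List (ℤ × ℤ)} (hp : ∀ s ∈ p, s ∈ S2) : (p.length : ℤ) ≤ width p := by
  induction p with
  | nil => simp
  | cons s p ih =>
    have hs := (mem_S2_iff.1 (hp s (by simp))).1
    have := ih fun t ht => hp t (by simp [ht])
    simp only [List.length_cons, Nat.cast_succ, width_cons]
    omega

lemma even_width_add_height {p : List (ℤ × ℤ)} (hp : ∀ s ∈ p, s ∈ S2) :
    Even (width p + height p) := by
  induction p with
  | nil => simp
  | cons s p ih =>
    have ih := ih fun t ht => hp t (by simp [ht])
    have hs := (mem_S2_iff.1 (hp s (by simp))).2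
    rw [width_cons, height_cons, add_add_add_comm]
    refine Even.add ?_ ih
    rcases hs with h | h <;> rw [h]
    exacts [⟨s.1, rfl⟩, ⟨0, by ring⟩]

lemma prefix_append_iff {α : Type*} {r p q : List α} :
    r <+: p ++ q ↔ r <+: p ∨ ∃ t, t <+: q ∧ r = p ++ t := by
  constructor
  · intro h
    rcases List.prefix_or_prefix_of_prefix h (List.prefix_append p q) with h' | ⟨t, rfl⟩
    · exact .inl h'
    · exact .inr ⟨t, (List.prefix_append_right_inj p).1 h, rfl⟩
  · rintro (h | ⟨t, ht, rfl⟩)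
    · exact h.trans (List.prefix_append p q)
    · exact (List.prefix_append_right_inj p).2 ht

/-- `IsWalk f a b p`: the steps `p`, all in `S2`, lead from height `a` to height `b`
without ever going below height `f`. -/
def IsWalk (f a b : ℤ) (p : List (ℤ × ℤ)) : Prop :=
  (∀ s ∈ p, s ∈ S2) ∧ a + height p = b ∧ ∀ q, q <+: p → f ≤ a + height q

lemma isPath_iff {n : ℕ} {p : List (ℤ × ℤ)} : IsPath S2 n p ↔ IsWalk 0 0 0 p ∧ width p = 2 * n := by
  simp only [IsPath, IsWalk, width, height, zero_add]
  tauto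

lemma IsWalk.floor_le {f a b : ℤ} {p : List (ℤ × ℤ)} (h : IsWalk f a b p) : f ≤ a := by
  simpa using h.2.2 [] List.nil_prefix

lemma IsWalk.mono {f f' a b : ℤ} {p : List (ℤ × ℤ)} (h : IsWalk f a b p) (hf : f' ≤ f) :
    IsWalk f' a b p :=
  ⟨h.1, h.2.1, fun q hq => hf.trans (h.2.2 q hq)⟩

lemma isWalk_nil {f a b : ℤ} : IsWalk f a b [] ↔ a = b ∧ f ≤ a := by
  simp [IsWalk]

lemma isWalk_singleton {f a b : ℤ} {s : ℤ × ℤ} :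
    IsWalk f a b [s] ↔ s ∈ S2 ∧ a + s.2 = b ∧ f ≤ a ∧ f ≤ b := by
  simp only [IsWalk, List.mem_singleton, forall_eq, height_cons, height_nil, add_zero,
    List.prefix_cons_iff, List.prefix_nil]
  constructor
  · rintro ⟨hs, rfl, h⟩
    exact ⟨hs, rfl, by simpa using h [] (.inl rfl), by simpa using h [s] (.inr ⟨[], rfl, rfl⟩)⟩
  · rintro ⟨hs, rfl, ha, hb⟩
    refine ⟨hs, rfl, ?_⟩
    rintro q (rfl | ⟨t, rfl, rfl⟩) <;> simpa

lemma isWalk_append {f a c : ℤ} {p q : List (ℤ × ℤ)} :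
    IsWalk f a c (p ++ q) ↔ IsWalk f a (a + height p) p ∧ IsWalk f (a + height p) c q := by
  simp only [IsWalk, List.mem_append, height_append, prefix_append_iff]
  constructor
  · rintro ⟨hs, hc, hpre⟩
    refine ⟨⟨fun s h => hs s (.inl h), trivial, fun r hr => hpre r (.inl hr)⟩,
      ⟨fun s h => hs s (.inr h), by omega, fun t ht => ?_⟩⟩
    simpa [add_assoc] using hpre (p ++ t) (.inr ⟨t, ht, rfl⟩)
  · rintro ⟨⟨hsp, -, hp⟩, ⟨hsq, hc, hq⟩⟩
    refine ⟨fun s h => h.elim (hsp s) (hsq s), by omega, ?_⟩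
    rintro r (hr | ⟨t, ht, rfl⟩)
    · exact hp r hr
    · simpa [add_assoc] using hq t ht

lemma isWalk_cons {f a b : ℤ} {s : ℤ × ℤ} {p : List (ℤ × ℤ)} :
    IsWalk f a b (s :: p) ↔ s ∈ S2 ∧ f ≤ a ∧ IsWalk f (a + s.2) b p := by
  rw [← List.singleton_append, isWalk_append, isWalk_singleton, height_cons, height_nil, add_zero]
  exact ⟨fun ⟨⟨hs, _, ha, _⟩, h⟩ => ⟨hs, ha, h⟩, fun ⟨hs, ha, h⟩ => ⟨⟨hs, rfl, ha, h.floor_le⟩, h⟩⟩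

lemma isWalk_add_iff {f a b : ℤ} (d : ℤ) {p : List (ℤ × ℤ)} :
    IsWalk (f + d) (a + d) (b + d) p ↔ IsWalk f a b p := by
  simp only [IsWalk, add_right_comm a d, add_left_inj, add_le_add_iff_right]

lemma isPath_append {i j : ℕ} {p q : List (ℤ × ℤ)} (hp : IsPath S2 i p) (hq : IsPath S2 j q) :
    IsPath S2 (i + j) (p ++ q) := by
  rw [isPath_iff] at *
  have hp0 : height p = 0 := by simpa using hp.1.2.1
  refine ⟨isWalk_append.2 ?_, by rw [width_append, hp.2, hq.2]; push_cast; ring⟩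
  rw [zero_add, hp0]
  exact ⟨hp.1, hq.1⟩

lemma height_eq_zero_of_isPath {n : ℕ} {p : List (ℤ × ℤ)} (h : IsPath S2 n p) : height p = 0 :=
  h.2.2.1

lemma semilength_unique {m n : ℕ} {p : List (ℤ × ℤ)} (hm : IsPath S2 m p)
    (hn : IsPath S2 n p) : m = n := by
  have := (isPath_iff.1 hm).2.symm.trans (isPath_iff.1 hn).2
  omega

lemma IsWalk.exists_isPath {p : List (ℤ × ℤ)} (h : IsWalk 0 0 0 p) : ∃ n, IsPath S2 n p := by
  have h0 : height p = 0 := by simpa using h.2.1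
  obtain ⟨k, hk⟩ : Even (width p) := by simpa [h0] using even_width_add_height h.1
  have := length_le_width h.1
  exact ⟨k.toNat, isPath_iff.2 ⟨h, by omega⟩⟩

lemma isPath_zero_iff {p : List (ℤ × ℤ)} : IsPath S2 0 p ↔ p = [] := by
  rw [isPath_iff]
  refine ⟨fun ⟨hw, hwidth⟩ => ?_, fun h => ⟨h ▸ isWalk_nil.2 ⟨rfl, le_rfl⟩, by simp [h]⟩⟩
  have := length_le_width hw.1
  rw [hwidth] at this
  simpa using this

lemma ne_nil_of_isPath {n : ℕ} {p : List (ℤ × ℤ)} (h : IsPath S2 n p) (hn : n ≠ 0) : p ≠ [] := by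
  rintro rfl
  have := (isPath_iff.1 h).2
  rw [width_nil] at this
  omega

lemma fst_le_of_isPath {n : ℕ} {p : List (ℤ × ℤ)} (h : IsPath S2 n p) {s : ℤ × ℤ} (hs : s ∈ p) :
    s.1 ≤ 2 * n := by
  rw [← (isPath_iff.1 h).2]
  refine List.single_le_sum (fun x hx => ?_) _ (List.mem_map_of_mem hs)
  obtain ⟨t, ht, rfl⟩ := List.mem_map.1 hx
  exact (mem_S2_iff.1 (h.1 t ht)).1.le

lemma finite_setOf_isPath (n : ℕ) : {p | IsPath S2 n p}.Finite := by
  set K := Set.Icc ((0 : ℤ), -(2 * n : ℤ)) (2 * n, 2 * n)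
  have : Finite K := (Set.finite_Icc _ _).to_subtype
  refine ((List.finite_length_le K (2 * n)).image (List.map Subtype.val)).subset fun p hp => ?_
  have hp : IsPath S2 n p := hp
  have hlen := length_le_width hp.1
  rw [(isPath_iff.1 hp).2] at hlen
  have hK : ∀ s ∈ p, s ∈ K := by
    intro s hs
    have h1 := fst_le_of_isPath hp hs
    obtain ⟨h2, h3 | h3⟩ := mem_S2_iff.1 (hp.1 s hs) <;>
      exact ⟨⟨by omega, by omega⟩, ⟨by omega, by omega⟩⟩
  lift p to List K using hK
  exact ⟨p, show p.length ≤ 2 * n by simp only [List.length_map] at hlen; omega, rfl⟩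

def IsPrimitive (p : List (ℤ × ℤ)) : Prop :=
  p ≠ [] ∧ ∀ q, q <+: p → height q = 0 → q = [] ∨ q = p

lemma IsPrimitive.eq_of_append_eq {B B' q q' : List (ℤ × ℤ)} (hB : IsPrimitive B)
    (hB' : IsPrimitive B') (h0 : height B = 0) (h0' : height B' = 0) (h : B ++ q = B' ++ q') :
    B = B' := by
  rcases List.prefix_or_prefix_of_prefix (List.prefix_append B q)
    (h ▸ List.prefix_append B' q') with hp | hp
  · exact (hB'.2 B hp h0).resolve_left hB.1
  · exact ((hB.2 B' hp h0').resolve_left hB'.1).symm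

lemma exists_isPrimitive_append {p : List (ℤ × ℤ)} (hp : IsWalk 0 0 0 p) (hne : p ≠ []) :
    ∃ B q, IsPrimitive B ∧ IsWalk 0 0 0 B ∧ IsWalk 0 0 0 q ∧ p = B ++ q := by
  by_cases hprim : IsPrimitive p
  · exact ⟨p, [], hprim, hp, isWalk_nil.2 ⟨rfl, le_rfl⟩, (List.append_nil p).symm⟩
  obtain ⟨q, ⟨t, rfl⟩, h0, hq, ht⟩ : ∃ q, q <+: p ∧ height q = 0 ∧ q ≠ [] ∧ q ≠ p := by
    simpa [IsPrimitive, hne, not_or, and_assoc] using hprim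
  rw [isWalk_append, zero_add, h0] at hp
  have : q.length < (q ++ t).length := by
    simpa [List.length_pos_iff] using ht
  obtain ⟨B, q', hB, hBw, hq', rfl⟩ := exists_isPrimitive_append hp.1 hq
  refine ⟨B, q' ++ t, hB, hBw, ?_, List.append_assoc B q' t⟩
  have hq'0 : height q' = 0 := by simpa using hq'.2.1
  rw [isWalk_append, hq'0, add_zero]
  exact ⟨hq', hp.2⟩
termination_by p.length

def arch (r u : ℤ) (m : List (ℤ × ℤ)) : List (ℤ × ℤ) := (r, r) :: (m ++ [(u, -u)])

lemma eq_up_of_mem_S2 {s : ℤ × ℤ} (hs : s ∈ S2) (h : 0 ≤ s.2) : s = (s.1, s.1) := by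
  obtain ⟨h1, h2 | h2⟩ := mem_S2_iff.1 hs
  · exact Prod.ext rfl h2
  · omega

lemma eq_down_of_mem_S2 {s : ℤ × ℤ} (hs : s ∈ S2) (h : s.2 ≤ 0) : s = (s.1, -s.1) := by
  obtain ⟨h1, h2 | h2⟩ := mem_S2_iff.1 hs
  · omega
  · exact Prod.ext rfl h2

lemma exists_arch {p : List (ℤ × ℤ)} (hp : IsWalk 0 0 0 p) (hne : p ≠ []) :
    ∃ r u m, p = arch r u m := by
  obtain ⟨s, t, rfl⟩ := List.exists_cons_of_ne_nil hne
  obtain ⟨hs, -, ht⟩ := isWalk_cons.1 hp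
  have hs0 : s.2 ≠ 0 := by have := mem_S2_iff.1 hs; omega
  rcases List.eq_nil_or_concat' t with rfl | ⟨m, x, rfl⟩
  · exact absurd (by simpa using (isWalk_nil.1 ht).1) hs0
  obtain ⟨hm, hx⟩ := isWalk_append.1 ht
  obtain ⟨hx, hx0, hb, -⟩ := isWalk_singleton.1 hx
  have hup := eq_up_of_mem_S2 hs (by simpa using hm.floor_le)
  have hdown := eq_down_of_mem_S2 hx (by omega)
  exact ⟨s.1, x.1, m, by rw [arch, ← hup, ← hdown]⟩

lemma isWalk_arch_iff {r u : ℤ} {m : List (ℤ × ℤ)} :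
    IsWalk 0 0 0 (arch r u m) ↔ 0 < r ∧ 0 < u ∧ IsWalk 0 r u m := by
  simp only [arch, isWalk_cons, isWalk_append, isWalk_nil, up_mem_S2, down_mem_S2, zero_add]
  constructor
  · rintro ⟨hr, -, hm, hu, -, hb, -⟩
    exact ⟨hr, hu, by rwa [show r + height m = u by omega] at hm⟩
  · rintro ⟨hr, hu, hm⟩
    have hb := hm.2.1
    exact ⟨hr, le_rfl, by rwa [hb], hu, by omega, by omega, by omega⟩

lemma isPrimitive_arch_iff {r u : ℤ} {m : List (ℤ × ℤ)} (hm : IsWalk 0 r u m) :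
    IsPrimitive (arch r u m) ↔ IsWalk 1 r u m := by
  refine ⟨fun h => ⟨hm.1, hm.2.1, fun q hq => ?_⟩, fun h => ⟨List.cons_ne_nil _ _, ?_⟩⟩
  · have hq0 := hm.2.2 q hq
    by_contra hlt
    have hcons : (r, r) :: q <+: arch r u m :=
      (List.prefix_cons_inj _).2 (hq.trans (List.prefix_append _ _))
    rcases h.2 _ hcons (by rw [height_cons]; omega) with h' | h'
    · exact List.cons_ne_nil _ _ h'
    · have hlen := hq.length_le
      rw [arch, List.cons_inj_right] at h'
      simp [h'] at hlen
  · intro q hq h0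
    rcases List.prefix_cons_iff.1 hq with rfl | ⟨t, rfl, ht⟩
    · exact .inl rfl
    rcases List.prefix_concat_iff.1 ht with rfl | ht
    · exact .inr rfl
    · have := h.2.2 t ht
      rw [height_cons] at h0
      omega

def shortUp (r : ℤ) : List (ℤ × ℤ) := if 2 ≤ r then [(r - 1, r - 1)] else []

def shortDown (u : ℤ) : List (ℤ × ℤ) := if 2 ≤ u then [(u - 1, -(u - 1))] else []

def shrinkArch (r u : ℤ) (m : List (ℤ × ℤ)) : List (ℤ × ℤ) := shortUp r ++ m ++ shortDown u

lemma isWalk_shortUp {r : ℤ} (hr : 0 < r) : IsWalk 0 0 (r - 1) (shortUp r) := by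
  unfold shortUp
  split_ifs with h
  · exact isWalk_singleton.2 ⟨up_mem_S2.2 (by omega), by ring, le_rfl, by omega⟩
  · exact isWalk_nil.2 ⟨by omega, le_rfl⟩

lemma isWalk_shortDown_iff {u b : ℤ} (hu : 0 < u) : IsWalk 0 b 0 (shortDown u) ↔ b = u - 1 := by
  unfold shortDown
  split_ifs with h
  · rw [isWalk_singleton, down_mem_S2]
    omega
  · rw [isWalk_nil]
    omega

lemma width_shortUp {r : ℤ} (hr : 0 < r) : width (shortUp r) = r - 1 := by
  unfold shortUp
  split_ifs
  · simp
  · simp only [width_nil]; omega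

lemma width_shortDown {u : ℤ} (hu : 0 < u) : width (shortDown u) = u - 1 := by
  unfold shortDown
  split_ifs
  · simp
  · simp only [width_nil]; omega

lemma width_shrinkArch {r u : ℤ} (hr : 0 < r) (hu : 0 < u) (m : List (ℤ × ℤ)) :
    width (shrinkArch r u m) + 2 = width (arch r u m) := by
  simp only [shrinkArch, arch, width_append, width_cons, width_shortUp hr, width_shortDown hu,
    width_nil]
  ring

lemma isWalk_shrinkArch_iff {r u : ℤ} {m : List (ℤ × ℤ)} (hr : 0 < r) (hu : 0 < u) :
    IsWalk 0 0 0 (shrinkArch r u m) ↔ IsWalk 1 r u m := by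
  have hup := isWalk_shortUp hr
  have hup0 : height (shortUp r) = r - 1 := by simpa using hup.2.1
  rw [shrinkArch, isWalk_append, isWalk_append, isWalk_shortDown_iff hu, height_append, hup0,
    zero_add, zero_add]
  constructor
  · rintro ⟨⟨-, hm⟩, hb⟩
    convert (isWalk_add_iff 1).2 hm using 1 <;> omega
  · intro hm
    have hb := hm.2.1
    refine ⟨⟨hup, ?_⟩, by omega⟩
    convert (isWalk_add_iff (-1)).2 hm using 1 <;> omega

/-- Undoes `arch` and records whether the first and last steps are longer than one unit. -/
def shrink (B : List (ℤ × ℤ)) : Bool × Bool × List (ℤ × ℤ) :=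
  (decide (2 ≤ (B.headD 0).1), decide (2 ≤ (B.getLastD 0).1),
    shrinkArch (B.headD 0).1 (B.getLastD 0).1 B.tail.dropLast)

@[simp] lemma shrink_arch (r u : ℤ) (m : List (ℤ × ℤ)) :
    shrink (arch r u m) = (decide (2 ≤ r), decide (2 ≤ u), shrinkArch r u m) := by
  rw [shrink, arch, List.headD_cons, List.tail_cons, List.dropLast_concat, ← List.cons_append,
    List.getLastD_concat]

lemma arch_eq_of_shrink_eq {r u r' u' : ℤ} {m m' : List (ℤ × ℤ)} (hr : 0 < r) (hu : 0 < u)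
    (hr' : 0 < r') (hu' : 0 < u') (h : shrink (arch r u m) = shrink (arch r' u' m')) :
    arch r u m = arch r' u' m' := by
  simp only [shrink_arch, Prod.mk.injEq, decide_eq_decide] at h
  obtain ⟨h2r, h2u, h⟩ := h
  simp only [shrinkArch, shortUp, shortDown] at h
  by_cases hr2 : 2 ≤ r <;> by_cases hu2 : 2 ≤ u
  all_goals simp [hr2, hu2, ← h2r, ← h2u] at h
  all_goals
    obtain rfl : r = r' := by omega
    obtain rfl : u = u' := by omega
    simp_all

lemma exists_shrink_arch_eq {p : List (ℤ × ℤ)} (hp : IsWalk 0 0 0 p) (hne : p ≠ []) (b₁ b₂ : Bool) :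
    ∃ r u m, 0 < r ∧ 0 < u ∧ shrink (arch r u m) = (b₁, b₂, p) := by
  obtain ⟨a, v, m, rfl⟩ := exists_arch hp hne
  obtain ⟨ha, hv, -⟩ := isWalk_arch_iff.1 hp
  refine ⟨if b₁ then a + 1 else 1, if b₂ then v + 1 else 1,
    (if b₁ then [] else [(a, a)]) ++ m ++ (if b₂ then [] else [(v, -v)]), ?_, ?_, ?_⟩
  · split_ifs <;> omega
  · split_ifs <;> omega
  · have h2a : 2 ≤ a + 1 := by omega
    have h2v : 2 ≤ v + 1 := by omega
    rw [shrink_arch]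
    cases b₁ <;> cases b₂ <;> simp [shrinkArch, shortUp, shortDown, arch, h2a, h2v]

abbrev Paths (n : ℕ) : Type := {p : List (ℤ × ℤ) // IsPath S2 n p}

abbrev PrimitivePaths (n : ℕ) : Type := {p : List (ℤ × ℤ) // IsPath S2 n p ∧ IsPrimitive p}

instance (n : ℕ) : Finite (Paths n) := (finite_setOf_isPath n).to_subtype

instance (n : ℕ) : Finite (PrimitivePaths n) :=
  Finite.of_injective (fun B => (⟨B.1, B.2.1⟩ : Paths n)) fun _ _ h =>
    Subtype.ext (Subtype.mk.inj h)

def appendPrimitive (n : ℕ)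
    (x : Σ ij : antidiagonal n, PrimitivePaths (ij.1.1 + 1) × Paths ij.1.2) : Paths (n + 1) :=
  ⟨x.2.1.1 ++ x.2.2.1, by
    have h := isPath_append x.2.1.2.1 x.2.2.2
    rwa [add_right_comm, HasAntidiagonal.mem_antidiagonal.1 x.1.2] at h⟩

lemma appendPrimitive_bijective (n : ℕ) : Function.Bijective (appendPrimitive n) := by
  constructor
  · rintro ⟨⟨⟨i, j⟩, hij⟩, B, q⟩ ⟨⟨⟨i', j'⟩, hij'⟩, B', q'⟩ h
    have happ : B.1 ++ q.1 = B'.1 ++ q'.1 := congrArg Subtype.val h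
    have hB : B.1 = B'.1 := B.2.2.eq_of_append_eq B'.2.2 (height_eq_zero_of_isPath B.2.1)
      (height_eq_zero_of_isPath B'.2.1) happ
    have hq : q.1 = q'.1 := List.append_cancel_left (hB ▸ happ)
    obtain rfl : i = i' := by
      have := semilength_unique B.2.1 (hB ▸ B'.2.1)
      dsimp only at this
      omega
    obtain rfl : j = j' := by
      rw [HasAntidiagonal.mem_antidiagonal] at hij hij'
      omega
    obtain rfl := Subtype.ext hB
    obtain rfl := Subtype.ext hq
    rfl
  · rintro ⟨p, hp⟩
    obtain ⟨B, q, hB, hBw, hqw, rfl⟩ :=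
      exists_isPrimitive_append (isPath_iff.1 hp).1 (ne_nil_of_isPath hp n.succ_ne_zero)
    obtain ⟨c, hc⟩ := hBw.exists_isPath
    obtain ⟨d, hd⟩ := hqw.exists_isPath
    obtain ⟨i, rfl⟩ : ∃ i, c = i + 1 :=
      Nat.exists_eq_succ_of_ne_zero fun h => hB.1 (isPath_zero_iff.1 (h ▸ hc))
    have hid : i + d = n := by have := semilength_unique (isPath_append hc hd) hp; omega
    exact ⟨⟨⟨(i, d), HasAntidiagonal.mem_antidiagonal.2 hid⟩, ⟨B, hc, hB⟩, ⟨q, hd⟩⟩, rfl⟩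

lemma isPath_shrink {n : ℕ} {B : List (ℤ × ℤ)} (hB : IsPath S2 (n + 1) B) (hprim : IsPrimitive B) :
    IsPath S2 n (shrink B).2.2 := by
  obtain ⟨hw, hwidth⟩ := isPath_iff.1 hB
  obtain ⟨r, u, m, rfl⟩ := exists_arch hw hprim.1
  obtain ⟨hr, hu, hm⟩ := isWalk_arch_iff.1 hw
  simp only [shrink_arch]
  rw [isPath_iff, isWalk_shrinkArch_iff hr hu, ← isPrimitive_arch_iff hm]
  have := width_shrinkArch hr hu m
  push_cast at hwidth
  exact ⟨hprim, by omega⟩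

def shrinkPrimitive (n : ℕ) (B : PrimitivePaths (n + 1)) : Bool × Bool × Paths n :=
  ((shrink B.1).1, (shrink B.1).2.1, ⟨(shrink B.1).2.2, isPath_shrink B.2.1 B.2.2⟩)

lemma shrinkPrimitive_bijective {n : ℕ} (hn : n ≠ 0) : Function.Bijective (shrinkPrimitive n) := by
  constructor
  · rintro ⟨B, hB, hBprim⟩ ⟨B', hB', hB'prim⟩ h
    have h' : shrink B = shrink B' := by
      simpa [shrinkPrimitive, Prod.ext_iff, Subtype.ext_iff] using h
    obtain ⟨r, u, m, rfl⟩ := exists_arch (isPath_iff.1 hB).1 hBprim.1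
    obtain ⟨r', u', m', rfl⟩ := exists_arch (isPath_iff.1 hB').1 hB'prim.1
    obtain ⟨hr, hu, -⟩ := isWalk_arch_iff.1 (isPath_iff.1 hB).1
    obtain ⟨hr', hu', -⟩ := isWalk_arch_iff.1 (isPath_iff.1 hB').1
    exact Subtype.ext (arch_eq_of_shrink_eq hr hu hr' hu' h')
  · rintro ⟨b₁, b₂, p, hp⟩
    obtain ⟨hw, hwidth⟩ := isPath_iff.1 hp
    obtain ⟨r, u, m, hr, hu, h⟩ := exists_shrink_arch_eq hw (ne_nil_of_isPath hp hn) b₁ b₂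
    rw [shrink_arch, Prod.mk.injEq, Prod.mk.injEq] at h
    obtain ⟨rfl, rfl, rfl⟩ := h
    have hm := (isWalk_shrinkArch_iff hr hu).1 hw
    have hB : IsPath S2 (n + 1) (arch r u m) := by
      have := width_shrinkArch hr hu m
      refine isPath_iff.2 ⟨isWalk_arch_iff.2 ⟨hr, hu, hm.mono zero_le_one⟩, ?_⟩
      push_cast
      omega
    exact ⟨⟨arch r u m, hB, (isPrimitive_arch_iff (hm.mono zero_le_one)).2 hm⟩, by
      simp [shrinkPrimitive]⟩

lemma card_paths_zero : Nat.card (Paths 0) = 1 := by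
  rw [Nat.card_eq_one_iff_exists]
  exact ⟨⟨[], isPath_zero_iff.2 rfl⟩, fun p => Subtype.ext (isPath_zero_iff.1 p.2)⟩

lemma card_paths_succ (n : ℕ) :
    Nat.card (Paths (n + 1)) =
      ∑ ij ∈ antidiagonal n, Nat.card (PrimitivePaths (ij.1 + 1)) * Nat.card (Paths ij.2) := by
  rw [← Nat.card_eq_of_bijective _ (appendPrimitive_bijective n), Nat.card_sigma]
  simp only [Nat.card_prod]
  exact sum_coe_sort (antidiagonal n) fun ij =>
    Nat.card (PrimitivePaths (ij.1 + 1)) * Nat.card (Paths ij.2)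

lemma card_primitivePaths_one : Nat.card (PrimitivePaths 1) = 1 := by
  have h₀ : IsWalk 1 1 1 [] := isWalk_nil.2 ⟨rfl, le_rfl⟩
  have hpath : IsPath S2 1 (arch 1 1 []) :=
    isPath_iff.2 ⟨isWalk_arch_iff.2 ⟨one_pos, one_pos, h₀.mono zero_le_one⟩, by simp [arch]⟩
  rw [Nat.card_eq_one_iff_exists]
  refine ⟨⟨arch 1 1 [], hpath, (isPrimitive_arch_iff (h₀.mono zero_le_one)).2 h₀⟩, ?_⟩
  rintro ⟨B, hB, hprim⟩
  obtain ⟨hw, hwidth⟩ := isPath_iff.1 hB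
  obtain ⟨r, u, m, rfl⟩ := exists_arch hw hprim.1
  obtain ⟨hr, hu, hm⟩ := isWalk_arch_iff.1 hw
  have hlen := length_le_width hm.1
  simp only [arch, width_cons, width_append, width_nil] at hwidth
  obtain ⟨rfl, rfl, hm0⟩ : r = 1 ∧ u = 1 ∧ m.length = 0 := by omega
  obtain rfl := List.eq_nil_of_length_eq_zero hm0
  rfl

lemma card_primitivePaths_succ {n : ℕ} (hn : n ≠ 0) :
    Nat.card (PrimitivePaths (n + 1)) = 4 * Nat.card (Paths n) := by
  rw [Nat.card_eq_of_bijective _ (shrinkPrimitive_bijective hn), Nat.card_prod, Nat.card_prod,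
    Nat.card_eq_fintype_card (α := Bool), Fintype.card_bool]
  ring

section Series

variable (R : Type*) [CommRing R]

noncomputable def pathSeries : R⟦X⟧ := mk fun n => (Nat.card (Paths n) : R)

noncomputable def primitiveSeries : R⟦X⟧ := mk fun n => (Nat.card (PrimitivePaths (n + 1)) : R)

lemma pathSeries_eq : pathSeries R = 1 + X * primitiveSeries R * pathSeries R := by
  ext (_ | n)
  · simp [pathSeries, card_paths_zero]
  · rw [mul_assoc, map_add, coeff_succ_X_mul, coeff_mul]
    simp [pathSeries, primitiveSeries, card_paths_succ]

lemma primitiveSeries_eq : primitiveSeries R = 4 * pathSeries R - 3 := by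
  rw [← map_ofNat (C (R := R)) 4, ← map_ofNat (C (R := R)) 3]
  ext (_ | n)
  · simp [pathSeries, primitiveSeries, card_primitivePaths_one, card_paths_zero]
    norm_num
  · simp [pathSeries, primitiveSeries, card_primitivePaths_succ n.succ_ne_zero]

lemma one_add_three_X_mul_pathSeries :
    (1 + 3 * X) * pathSeries R = 1 + 4 * X * pathSeries R ^ 2 := by
  linear_combination pathSeries_eq R + X * pathSeries R * primitiveSeries_eq R

end Series

end S2Path

theorem kung_mier_S2 (P s : PowerSeries ℚ)
    (hP : ∀ n : ℕ, PowerSeries.coeff n P =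
      if n = 0 then 1
      else (Nat.card {p : List (ℤ × ℤ) // IsPath S2 n p} : ℚ))
    (hs0 : PowerSeries.constantCoeff s = 1)
    (hs2 : s ^ 2 = 1 - 10 * PowerSeries.X + 9 * PowerSeries.X ^ 2) :
    8 * PowerSeries.X * P = 1 + 3 * PowerSeries.X - s := by
  have hPeq : P = S2Path.pathSeries ℚ := by
    ext n
    rw [hP, S2Path.pathSeries, coeff_mk]
    split_ifs with hn
    · simp [hn, S2Path.card_paths_zero]
    · rfl
  have hsq : (1 + 3 * X - 8 * X * P) ^ 2 = s ^ 2 := by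
    rw [hs2, hPeq]
    linear_combination (-16 * X) * S2Path.one_add_three_X_mul_pathSeries ℚ
  rcases sq_eq_sq_iff_eq_or_eq_neg.1 hsq with h | h
  · linear_combination -h
  · have h0 := congrArg constantCoeff h
    norm_num [hs0] at h0
end

section
/- With R̄_L(x,y,z) = R_L(x,y,z) − 1, one has the identity of formal power series (1−xz+x)² · R̄_{U1}(x,y,z) = (1−xz)² · R̄_{UL_{S3}}(x,y,z), where U1 is the set of Schröder paths with at least one U step that start with a U step and end with a D step. -/
noncomputable def Xv : MvPowerSeries (Fin 3) ℚ := MvPowerSeries.X 0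
noncomputable def Yv : MvPowerSeries (Fin 3) ℚ := MvPowerSeries.X 1
noncomputable def Zv : MvPowerSeries (Fin 3) ℚ := MvPowerSeries.X 2

/-- The monomial `x^n y^a z^b` as an exponent vector. -/
noncomputable def m3 (n a b : ℕ) : Fin 3 →₀ ℕ :=
  Finsupp.single (0 : Fin 3) n + Finsupp.single 1 a + Finsupp.single 2 b

noncomputable def Apoly : MvPowerSeries (Fin 3) ℚ := 1 - Xv * Zv
noncomputable def Bpoly : MvPowerSeries (Fin 3) ℚ := Xv + Yv * (1 - Xv * Zv)
noncomputable def Cpoly : MvPowerSeries (Fin 3) ℚ := 1 - Xv * Zv + Xv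
noncomputable def Delta : MvPowerSeries (Fin 3) ℚ :=
  Apoly ^ 4 - 2 * Xv * Apoly ^ 2 * (Bpoly ^ 2 + Cpoly ^ 2)
    + Xv ^ 2 * (Bpoly ^ 2 - Cpoly ^ 2) ^ 2

def U : ℤ × ℤ := (1, 1)
def D : ℤ × ℤ := (1, -1)

/-!
Split the paths with a property `P` by their first step, which is `U` or `H`. If `P` is
insensitive to a leading `H` (and fails on the empty path), stripping the first `H` of a path
that starts with `H` leaves a path of order one less, which again starts with `U` or `H`; only
in the second case does a horizontal run disappear. With `F`, `G`, `F_H` the series of all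
`P`-paths, of those starting with `U`, and of those starting with `H`, this gives
`F = G + F_H` and `F_H = x (G + z F_H)`, hence `(1 - xz) F = (1 - xz + x) G`.

For `P` = "contains a `U`" this turns `R̄_{UL_{S3}}` into the series of paths starting with `U`,
which by reflection equals the series of paths ending with `D`; for `P` = "ends with `D`" it
turns that series into `R̄_{U1}`.
-/

open MvPowerSeries

def H : ℤ × ℤ := (2, 0)

lemma mem_S3 {s : ℤ × ℤ} : s ∈ S3 ↔ s = U ∨ s = D ∨ s = H := by
  simp [S3, U, D, H]

lemma U_ne_H : U ≠ H := by simp [U, H]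

lemma length_le_sum_fst {p : List (ℤ × ℤ)} (hp : ∀ s ∈ p, s ∈ S3) :
    (p.length : ℤ) ≤ (p.map Prod.fst).sum := by
  induction p with
  | nil => simp
  | cons s p ih =>
    have hs : 1 ≤ s.1 := by
      rcases mem_S3.mp (hp s List.mem_cons_self) with rfl | rfl | rfl <;> simp [U, D, H]
    simp only [List.length_cons, List.map_cons, List.sum_cons, Nat.cast_succ]
    linarith [ih fun t ht => hp t (List.mem_cons_of_mem s ht)]

lemma IsPath.eq_nil {p : List (ℤ × ℤ)} (hp : IsPath S3 0 p) : p = [] := by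
  have := length_le_sum_fst hp.1
  rw [hp.2.1] at this
  exact List.length_eq_zero_iff.mp (by omega)

lemma finite_setOf_isPath (n : ℕ) : {p | IsPath S3 n p}.Finite := by
  have : Finite S3 := (Set.toFinite {U, D, H}).subset fun s hs => by simpa using mem_S3.mp hs
  refine ((List.finite_length_le S3 (2 * n)).image (List.map Subtype.val)).subset fun p hp => ?_
  refine ⟨p.attachWith (· ∈ S3) hp.1, ?_, by simpa using List.attach_map_subtype_val p⟩
  have := length_le_sum_fst hp.1
  rw [hp.2.1] at this
  simp only [Set.mem_ofPred_eq, List.length_attachWith]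
  exact_mod_cast this

lemma IsPath.head_eq {n : ℕ} {s : ℤ × ℤ} {p : List (ℤ × ℤ)} (hp : IsPath S3 n (s :: p)) :
    s = U ∨ s = H := by
  rcases mem_S3.mp (hp.1 s List.mem_cons_self) with hs | rfl | hs
  · exact Or.inl hs
  · simpa [D] using hp.2.2.2 [D] (List.cons_prefix_cons.mpr ⟨rfl, List.nil_prefix⟩)
  · exact Or.inr hs

lemma isPath_H_cons {n : ℕ} {p : List (ℤ × ℤ)} : IsPath S3 (n + 1) (H :: p) ↔ IsPath S3 n p := by
  simp only [IsPath, List.forall_mem_cons, List.map_cons, List.sum_cons, H, Nat.cast_succ]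
  constructor
  · rintro ⟨⟨-, hS⟩, hfst, hsnd, hpre⟩
    refine ⟨hS, by linarith, by simpa using hsnd, fun q hq => ?_⟩
    simpa using hpre ((2, 0) :: q) (List.cons_prefix_cons.mpr ⟨rfl, hq⟩)
  · rintro ⟨hS, hfst, hsnd, hpre⟩
    refine ⟨⟨by simp [S3], hS⟩, by linarith, by simpa using hsnd, fun q hq => ?_⟩
    rcases q with _ | ⟨t, q⟩
    · simp
    · obtain ⟨rfl, hqp⟩ := List.cons_prefix_cons.mp hq
      simpa using hpre q hqp

lemma dr_H_cons (p : List (ℤ × ℤ)) : dr (H :: p) = dr p := by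
  cases p <;> simp [dr, H]

lemma hr_H_cons {s : ℤ × ℤ} {p : List (ℤ × ℤ)} (hs : p.head? = some s) :
    hr (H :: p) = hr p + if s = H then 1 else 0 := by
  obtain ⟨p, rfl⟩ : ∃ t, p = s :: t := by cases p <;> simp_all
  by_cases h : s = H
  · simp [hr, h, H]
  · simp [hr, h, Ne.symm h]

lemma List.zip_tail_reverse {α : Type*} (l : List α) :
    l.reverse.zip l.reverse.tail = ((l.zip l.tail).map Prod.swap).reverse := by
  refine List.ext_getElem (by simp) fun i h _ => ?_
  simp only [List.length_zip, List.length_reverse, List.length_tail] at h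
  simp [List.getElem_reverse]
  congr 1
  omega

def mirrorStep (s : ℤ × ℤ) : ℤ × ℤ := (s.1, -s.2)

/-- Reflection of a path in a vertical line; it exchanges `U` and `D`. -/
def mirror (p : List (ℤ × ℤ)) : List (ℤ × ℤ) := (p.map mirrorStep).reverse

lemma mirrorStep_involutive : Function.Involutive mirrorStep := fun s => by simp [mirrorStep]

lemma mirror_involutive : Function.Involutive mirror := fun p => by
  simp [mirror, List.map_reverse, mirrorStep_involutive.comp_self]

lemma mirror_append (p q : List (ℤ × ℤ)) : mirror (p ++ q) = mirror q ++ mirror p := by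
  simp [mirror]

lemma sum_fst_mirror (p : List (ℤ × ℤ)) :
    ((mirror p).map Prod.fst).sum = (p.map Prod.fst).sum := by
  simp [mirror, List.map_reverse, Function.comp_def, mirrorStep]

lemma sum_snd_mirror (p : List (ℤ × ℤ)) :
    ((mirror p).map Prod.snd).sum = -(p.map Prod.snd).sum := by
  simp [mirror, List.map_reverse, Function.comp_def, mirrorStep, List.sum_neg]

lemma countP_zip_tail_mirror (f : (ℤ × ℤ) × (ℤ × ℤ) → Bool) (p : List (ℤ × ℤ)) :
    ((mirror p).zip (mirror p).tail).countP f =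
      (p.zip p.tail).countP fun q => f (mirrorStep q.2, mirrorStep q.1) := by
  rw [mirror, List.zip_tail_reverse, List.countP_reverse, ← List.map_tail, List.zip_map,
    List.map_map, List.countP_map]
  rfl

lemma dr_mirror (p : List (ℤ × ℤ)) : dr (mirror p) = dr p := by
  rw [dr, dr, countP_zip_tail_mirror]
  refine List.countP_congr fun ⟨⟨a, b⟩, ⟨c, d⟩⟩ _ => ?_
  simp only [mirrorStep]
  grind

lemma hr_mirror (p : List (ℤ × ℤ)) : hr (mirror p) = hr p := by
  rw [hr, hr, countP_zip_tail_mirror]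
  refine List.countP_congr fun ⟨⟨a, b⟩, ⟨c, d⟩⟩ _ => ?_
  simp only [mirrorStep]
  grind

lemma isPath_mirror {n : ℕ} {p : List (ℤ × ℤ)} (hp : IsPath S3 n p) :
    IsPath S3 n (mirror p) := by
  obtain ⟨hS, hfst, hsnd, hpre⟩ := hp
  refine ⟨fun s hs => ?_, by rw [sum_fst_mirror, hfst], by rw [sum_snd_mirror, hsnd, neg_zero],
    fun q ⟨r, hqr⟩ => ?_⟩
  · obtain ⟨t, ht, rfl⟩ := List.mem_map.mp (List.mem_reverse.mp hs)
    rcases mem_S3.mp (hS t ht) with rfl | rfl | rfl <;> simp [mirrorStep, S3, U, D, H]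
  · -- `mirror r` is a prefix of `p` of the same height as `q`
    have hp : p = mirror r ++ mirror q := by
      rw [← mirror_involutive p, ← hqr, mirror_append]
    have := congrArg (fun l => (l.map Prod.snd).sum) hp
    simp only [hsnd, List.map_append, List.sum_append, sum_snd_mirror] at this
    have := hpre _ ⟨_, hp.symm⟩
    rw [sum_snd_mirror] at this
    linarith

lemma head?_mirror_eq_some_U {p : List (ℤ × ℤ)} :
    (mirror p).head? = some U ↔ p.getLast? = some D := by
  rw [mirror, List.head?_reverse, List.getLast?_map]
  constructor
  · intro h
    obtain ⟨s, hs, hsU⟩ := Option.map_eq_some_iff.mp h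
    rw [hs, ← mirrorStep_involutive s, hsU]
    rfl
  · intro h
    rw [h]
    rfl

def pathSet (P : List (ℤ × ℤ) → Prop) (n a b : ℕ) : Set (List (ℤ × ℤ)) :=
  {p | IsPath S3 n p ∧ P p ∧ dr p = a ∧ hr p = b}

/-- `R̄_L` for the set `L` of Schröder paths satisfying `P`. -/
noncomputable def genFun (P : List (ℤ × ℤ) → Prop) : MvPowerSeries (Fin 3) ℚ :=
  fun m => ((pathSet P (m 0) (m 1) (m 2)).ncard : ℚ)

lemma finite_pathSet (P : List (ℤ × ℤ) → Prop) (n a b : ℕ) : (pathSet P n a b).Finite :=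
  (finite_setOf_isPath n).subset fun _ hp => hp.1

lemma m3_eq (m : Fin 3 →₀ ℕ) : m3 (m 0) (m 1) (m 2) = m := by
  ext i; fin_cases i <;> simp [m3]

lemma ext_m3 {φ ψ : MvPowerSeries (Fin 3) ℚ}
    (h : ∀ n a b, coeff (m3 n a b) φ = coeff (m3 n a b) ψ) : φ = ψ :=
  MvPowerSeries.ext fun m => m3_eq m ▸ h _ _ _

lemma coeff_genFun (P : List (ℤ × ℤ) → Prop) (n a b : ℕ) :
    coeff (m3 n a b) (genFun P) = (pathSet P n a b).ncard := by
  change ((pathSet P _ _ _).ncard : ℚ) = _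
  simp [m3]

lemma eq_genFun {R : MvPowerSeries (Fin 3) ℚ} {P : List (ℤ × ℤ) → Prop}
    (hR : ∀ n a b : ℕ, coeff (m3 n a b) R =
      (Nat.card {p : List (ℤ × ℤ) // IsPath S3 n p ∧ P p ∧ dr p = a ∧ hr p = b} : ℚ)) :
    R = genFun P :=
  ext_m3 fun n a b => by rw [hR, coeff_genFun, ← Nat.card_coe_set_eq]; rfl

lemma genFun_comp_mirror (P : List (ℤ × ℤ) → Prop) : genFun (P ∘ mirror) = genFun P := by
  refine ext_m3 fun n a b => ?_
  have : pathSet (P ∘ mirror) n a b = mirror '' pathSet P n a b := by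
    rw [mirror_involutive.image_eq_preimage_symm]
    ext p
    simp only [pathSet, Set.mem_preimage, Set.mem_ofPred_eq, Function.comp_apply, dr_mirror,
      hr_mirror]
    exact and_congr_left fun _ =>
      ⟨isPath_mirror, fun hp => mirror_involutive p ▸ isPath_mirror hp⟩
  rw [coeff_genFun, coeff_genFun, this, Set.ncard_image_of_injective _ mirror_involutive.injective]

lemma coeff_m3_succ_Xv_mul (φ : MvPowerSeries (Fin 3) ℚ) (n a b : ℕ) :
    coeff (m3 (n + 1) a b) (Xv * φ) = coeff (m3 n a b) φ := by
  rw [show m3 (n + 1) a b = Finsupp.single 0 1 + m3 n a b by simp [m3]; abel, Xv, X,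
    coeff_add_monomial_mul, one_mul]

lemma coeff_m3_zero_Xv_mul (φ : MvPowerSeries (Fin 3) ℚ) (a b : ℕ) :
    coeff (m3 0 a b) (Xv * φ) = 0 := by
  rw [Xv, X, coeff_monomial_mul, if_neg fun h => by simpa [m3] using h 0]

lemma coeff_m3_succ_Zv_mul (φ : MvPowerSeries (Fin 3) ℚ) (n a b : ℕ) :
    coeff (m3 n a (b + 1)) (Zv * φ) = coeff (m3 n a b) φ := by
  rw [show m3 n a (b + 1) = Finsupp.single 2 1 + m3 n a b by simp [m3]; abel, Zv, X,
    coeff_add_monomial_mul, one_mul]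

lemma coeff_m3_zero_Zv_mul (φ : MvPowerSeries (Fin 3) ℚ) (n a : ℕ) :
    coeff (m3 n a 0) (Zv * φ) = 0 := by
  rw [Zv, X, coeff_monomial_mul, if_neg fun h => by simpa [m3] using h 2]

def startsWith (s : ℤ × ℤ) (P : List (ℤ × ℤ) → Prop) (p : List (ℤ × ℤ)) : Prop :=
  p.head? = some s ∧ P p

lemma pathSet_startsWith_subset_range (s : ℤ × ℤ) (P : List (ℤ × ℤ) → Prop) (n a b : ℕ) :
    pathSet (startsWith s P) n a b ⊆ Set.range (s :: ·) := fun p ⟨_, ⟨hs, _⟩, _⟩ => by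
  rcases p with _ | ⟨t, p⟩
  · simp at hs
  · exact ⟨p, by simpa using hs.symm⟩

lemma disjoint_pathSet_startsWith_U_H (P Q : List (ℤ × ℤ) → Prop) (n a b n' a' b' : ℕ) :
    Disjoint (pathSet (startsWith U P) n a b) (pathSet (startsWith H Q) n' a' b') :=
  Set.disjoint_left.mpr fun _ ⟨_, ⟨hU, _⟩, _⟩ ⟨_, ⟨hH, _⟩, _⟩ =>
    U_ne_H (Option.some_injective _ (hU.symm.trans hH))

lemma pathSet_startsWith_H_zero (P : List (ℤ × ℤ) → Prop) (a b : ℕ) :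
    pathSet (startsWith H P) 0 a b = ∅ :=
  Set.eq_empty_of_forall_notMem fun _ ⟨hp, ⟨hH, _⟩, _⟩ => by simp [hp.eq_nil] at hH

section FirstStep

variable {P : List (ℤ × ℤ) → Prop}

lemma pathSet_eq_union (hnil : ¬ P []) (n a b : ℕ) :
    pathSet P n a b = pathSet (startsWith U P) n a b ∪ pathSet (startsWith H P) n a b := by
  ext p
  simp only [pathSet, startsWith, Set.mem_union, Set.mem_ofPred_eq]
  constructor
  · rintro ⟨hp, hP, hdr, hhr⟩
    rcases p with _ | ⟨s, p⟩
    · exact absurd hP hnil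
    · rcases hp.head_eq with rfl | rfl
      · exact Or.inl ⟨hp, ⟨rfl, hP⟩, hdr, hhr⟩
      · exact Or.inr ⟨hp, ⟨rfl, hP⟩, hdr, hhr⟩
  · rintro (⟨hp, ⟨-, hP⟩, hdr, hhr⟩ | ⟨hp, ⟨-, hP⟩, hdr, hhr⟩) <;> exact ⟨hp, hP, hdr, hhr⟩

lemma genFun_eq_add (hnil : ¬ P []) :
    genFun P = genFun (startsWith U P) + genFun (startsWith H P) :=
  ext_m3 fun n a b => by
    rw [map_add, coeff_genFun, coeff_genFun, coeff_genFun, pathSet_eq_union hnil,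
      Set.ncard_union_eq (disjoint_pathSet_startsWith_U_H ..) (finite_pathSet ..)
        (finite_pathSet ..), Nat.cast_add]

lemma H_cons_mem_pathSet_startsWith_H (hnil : ¬ P []) (hH : ∀ q, P (H :: q) ↔ P q) {n a b : ℕ}
    {p : List (ℤ × ℤ)} :
    H :: p ∈ pathSet (startsWith H P) (n + 1) a b ↔
      IsPath S3 n p ∧ P p ∧ dr p = a ∧
        (p.head? = some U ∧ hr p = b ∨ p.head? = some H ∧ hr p + 1 = b) := by
  simp only [pathSet, startsWith, Set.mem_ofPred_eq, List.head?_cons, isPath_H_cons, hH,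
    dr_H_cons, true_and]
  refine and_congr_right fun hp => and_congr_right fun hP => and_congr_right fun _ => ?_
  rcases p with _ | ⟨s, p⟩
  · exact absurd hP hnil
  · rw [hr_H_cons rfl]
    rcases hp.head_eq with rfl | rfl <;> simp [U_ne_H, U_ne_H.symm]

lemma preimage_pathSet_startsWith_H_succ_zero (hnil : ¬ P []) (hH : ∀ q, P (H :: q) ↔ P q)
    (n a : ℕ) :
    (H :: ·) ⁻¹' pathSet (startsWith H P) (n + 1) a 0 = pathSet (startsWith U P) n a 0 := by
  ext p
  rw [Set.mem_preimage, H_cons_mem_pathSet_startsWith_H hnil hH]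
  simp only [Nat.add_eq_zero_iff, one_ne_zero, and_false, or_false, pathSet, startsWith,
    Set.mem_ofPred_eq]
  tauto

lemma preimage_pathSet_startsWith_H_succ_succ (hnil : ¬ P []) (hH : ∀ q, P (H :: q) ↔ P q)
    (n a b : ℕ) :
    (H :: ·) ⁻¹' pathSet (startsWith H P) (n + 1) a (b + 1) =
      pathSet (startsWith U P) n a (b + 1) ∪ pathSet (startsWith H P) n a b := by
  ext p
  rw [Set.mem_preimage, H_cons_mem_pathSet_startsWith_H hnil hH]
  simp only [Nat.add_right_cancel_iff, pathSet, startsWith, Set.mem_union, Set.mem_ofPred_eq]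
  tauto

lemma genFun_startsWith_H (hnil : ¬ P []) (hH : ∀ q, P (H :: q) ↔ P q) :
    genFun (startsWith H P) = Xv * (genFun (startsWith U P) + Zv * genFun (startsWith H P)) := by
  refine ext_m3 fun n a b => ?_
  rcases n with _ | n
  · rw [coeff_m3_zero_Xv_mul, coeff_genFun, pathSet_startsWith_H_zero, Set.ncard_empty,
      Nat.cast_zero]
  rw [coeff_m3_succ_Xv_mul, map_add, coeff_genFun, coeff_genFun,
    ← Set.ncard_preimage_of_injective_subset_range List.cons_injective
      (pathSet_startsWith_subset_range ..)]
  rcases b with _ | b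
  · rw [coeff_m3_zero_Zv_mul, preimage_pathSet_startsWith_H_succ_zero hnil hH, add_zero]
  · rw [coeff_m3_succ_Zv_mul, coeff_genFun, preimage_pathSet_startsWith_H_succ_succ hnil hH,
      Set.ncard_union_eq (disjoint_pathSet_startsWith_U_H ..) (finite_pathSet ..)
        (finite_pathSet ..), Nat.cast_add]

theorem Apoly_mul_genFun (hnil : ¬ P []) (hH : ∀ q, P (H :: q) ↔ P q) :
    Apoly * genFun P = Cpoly * genFun (startsWith U P) := by
  have hsplit := genFun_eq_add hnil
  have hstartH := genFun_startsWith_H hnil hH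
  rw [Apoly, Cpoly]
  linear_combination (1 - Xv * Zv) * hsplit + hstartH

end FirstStep

/-- part of Lemma 3.1: `(1−xz+x)²·R̄_{U1} = (1−xz)²·R̄_{UL_{S3}}`, where `U1` consists of Schröder paths with at least one U step starting with U and ending with D. -/
theorem lemma_U1 (Rsub Rall : MvPowerSeries (Fin 3) ℚ)
    (hRsub : ∀ n a b : ℕ, MvPowerSeries.coeff (m3 n a b) Rsub =
      (Nat.card {p : List (ℤ × ℤ) //
        IsPath S3 n p ∧ U ∈ p ∧ p.head? = some U ∧ p.getLast? = some D ∧ dr p = a ∧ hr p = b} : ℚ))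
    (hRall : ∀ n a b : ℕ, MvPowerSeries.coeff (m3 n a b) Rall =
      (Nat.card {p : List (ℤ × ℤ) //
        IsPath S3 n p ∧ U ∈ p ∧ dr p = a ∧ hr p = b} : ℚ)) :
    Cpoly ^ 2 * Rsub = Apoly ^ 2 * Rall := by
  have hU_of_head {p : List (ℤ × ℤ)} (h : p.head? = some U) : U ∈ p := List.mem_of_mem_head? h
  have hsub : Rsub = genFun (startsWith U (·.getLast? = some D)) :=
    eq_genFun fun n a b => by
      simpa only [startsWith, ← and_assoc, and_iff_right_of_imp hU_of_head] using hRsub n a b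
  have hmirror : genFun (startsWith U (U ∈ ·)) = genFun (·.getLast? = some D) := by
    rw [← genFun_comp_mirror]
    congr
    funext p
    simp only [startsWith, Function.comp_apply, head?_mirror_eq_some_U]
    exact propext <| and_iff_left_of_imp fun h => hU_of_head (head?_mirror_eq_some_U.mpr h)
  have h1 : Apoly * Rall = Cpoly * genFun (·.getLast? = some D) := by
    rw [eq_genFun hRall, ← hmirror]
    exact Apoly_mul_genFun List.not_mem_nil fun q => by simp [U_ne_H]
  have h2 : Apoly * genFun (·.getLast? = some D) = Cpoly * Rsub := by
    rw [hsub]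
    exact Apoly_mul_genFun (by simp) fun q => by cases q <;> simp [H, D]
  linear_combination (-Apoly) * h1 - Cpoly * h2
end

section
/- Let P_{S4}(x) = 1 + Σ_{n≥1} |L_{S4}(n)| xⁿ be the formal power series in x over ℚ counting the paths in L_{S4}(n). Then 2x(2−3x)² · P_{S4}(x) = (1−x)(1+x−4x²) − (1−x)²·√(1−12x+16x²), where the square root denotes the unique formal power series with constant term 1 whose square is 1−12x+16x². -/
/-!
Decompose paths by their first step. Every step of `S4` is `r • u` with `r > 0` and `u` one of
`(1, 1)`, `(1, -1)`, `(2, 0)`. If `r = 1`, deleting the step leaves a path starting at height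
`k + u.2`; if `r > 1`, shrinking the step to `(r - 1) • u` leaves a path from that same height
whose first step is again a multiple of `u`. For the generating functions `G k` of paths from
height `k` down to the axis this gives a linear system whose solution is unique, coefficient by
coefficient. The kernel method supplies an explicit solution: with `C = (1 - x) / (2 - 3x)` and
`v` the power-series root of `x (2 - 3x) v² - (1 + x - 4x²) v + (2 - 3x) = 0`, namely
`2x (2 - 3x) v = 1 + x - 4x² - (1 - x) √(1 - 12x + 16x²)`, one has `G k = C (v - 1) vᵏ` for
`k ≥ 1` and `G 0 = C v`. Since `P = G 0`, the formula follows.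
-/

open PowerSeries

namespace LatticePath

def NeverBelow (k : ℤ) (p : List (ℤ × ℤ)) : Prop :=
  ∀ q, q <+: p → 0 ≤ k + (q.map Prod.snd).sum

theorem neverBelow_nil {k : ℤ} : NeverBelow k [] ↔ 0 ≤ k := by
  simp [NeverBelow]

theorem neverBelow_cons {k : ℤ} {a : ℤ × ℤ} {p : List (ℤ × ℤ)} :
    NeverBelow k (a :: p) ↔ 0 ≤ k ∧ NeverBelow (k + a.2) p := by
  refine ⟨fun h => ⟨by simpa using h [] List.nil_prefix, fun q hq => ?_⟩, ?_⟩
  · simpa [add_assoc] using h (a :: q) ((List.prefix_cons_inj a).mpr hq)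
  · rintro ⟨hk, hp⟩ (_ | ⟨b, q⟩) hq
    · simpa using hk
    · obtain ⟨rfl, hq'⟩ := List.cons_prefix_cons.mp hq
      simpa [add_assoc] using hp q hq'

def pathsFrom (S : Set (ℤ × ℤ)) (k n : ℤ) : Set (List (ℤ × ℤ)) :=
  {p | (∀ s ∈ p, s ∈ S) ∧ (p.map Prod.fst).sum = n ∧ (p.map Prod.snd).sum = -k ∧
    NeverBelow k p}

def pathsFromAlong (S : Set (ℤ × ℤ)) (u : ℤ × ℤ) (k n : ℤ) : Set (List (ℤ × ℤ)) :=
  {p ∈ pathsFrom S k n | ∃ r : ℤ, 0 < r ∧ ∃ t, p = r • u :: t}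

section General

variable {S : Set (ℤ × ℤ)} {k n : ℤ}

theorem nil_mem_pathsFrom : [] ∈ pathsFrom S k n ↔ k = 0 ∧ n = 0 := by
  simp only [pathsFrom, Set.mem_ofPred_eq, List.not_mem_nil, List.map_nil, List.sum_nil,
    neverBelow_nil, IsEmpty.forall_iff, implies_true, zero_eq_neg, true_and]
  omega

theorem cons_mem_pathsFrom {a : ℤ × ℤ} {p : List (ℤ × ℤ)} :
    a :: p ∈ pathsFrom S k n ↔ a ∈ S ∧ 0 ≤ k ∧ p ∈ pathsFrom S (k + a.2) (n - a.1) := by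
  simp only [pathsFrom, Set.mem_ofPred_eq, List.forall_mem_cons, List.map_cons, List.sum_cons,
    neverBelow_cons]
  constructor
  · rintro ⟨⟨ha, hp⟩, hfst, hsnd, hk, hbelow⟩
    exact ⟨ha, hk, hp, by omega, by omega, hbelow⟩
  · rintro ⟨ha, hk, hp, hfst, hsnd, hbelow⟩
    exact ⟨⟨ha, hp⟩, by omega, by omega, hk, hbelow⟩

theorem smul_cons_mem_pathsFrom {r : ℤ} {u : ℤ × ℤ} {p : List (ℤ × ℤ)} :
    r • u :: p ∈ pathsFrom S k n ↔
      r • u ∈ S ∧ 0 ≤ k ∧ p ∈ pathsFrom S (k + r * u.2) (n - r * u.1) := by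
  simp [cons_mem_pathsFrom]

theorem nonneg_of_mem_pathsFrom {p : List (ℤ × ℤ)} (hp : p ∈ pathsFrom S k n) : 0 ≤ k := by
  simpa using hp.2.2.2 [] List.nil_prefix

theorem pathsFromAlong_subset {u : ℤ × ℤ} : pathsFromAlong S u k n ⊆ pathsFrom S k n :=
  fun _ hp => hp.1

theorem pathsFromAlong_eq_union {u : ℤ × ℤ} (hS : ∀ r : ℤ, 0 < r → r • u ∈ S) (hk : 0 ≤ k) :
    pathsFromAlong S u k n =
      (u :: ·) '' pathsFrom S (k + u.2) (n - u.1) ∪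
        List.modifyHead (· + u) '' pathsFromAlong S u (k + u.2) (n - u.1) := by
  ext p
  constructor
  · rintro ⟨hp, r, hr, t, rfl⟩
    obtain ⟨-, -, ht⟩ := smul_cons_mem_pathsFrom.mp hp
    obtain rfl | hr1 := eq_or_lt_of_le (show 1 ≤ r by omega)
    · exact Or.inl ⟨t, by simpa using ht, by simp⟩
    · -- the height `k + u.2` lies between `k` and `k + r * u.2`
      have hku : 0 ≤ k + u.2 := by
        have := nonneg_of_mem_pathsFrom ht
        rcases le_total 0 u.2 with h | h <;> nlinarith
      refine Or.inr ⟨(r - 1) • u :: t, ⟨smul_cons_mem_pathsFrom.mpr ⟨hS _ (by omega), hku, ?_⟩,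
        r - 1, by omega, t, rfl⟩, by simp [sub_smul]⟩
      convert ht using 2 <;> ring
  · rintro (⟨q, hq, rfl⟩ | ⟨q, ⟨hq, r, hr, t, rfl⟩, rfl⟩)
    · exact ⟨cons_mem_pathsFrom.mpr ⟨by simpa using hS 1 one_pos, hk, hq⟩, 1, one_pos, q,
        by simp⟩
    · obtain ⟨-, -, ht⟩ := smul_cons_mem_pathsFrom.mp hq
      refine ⟨?_, r + 1, by omega, t, by simp [add_smul]⟩
      rw [List.modifyHead_cons, show r • u + u = (r + 1) • u by simp [add_smul]]
      refine smul_cons_mem_pathsFrom.mpr ⟨hS _ (by omega), hk, ?_⟩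
      convert ht using 2 <;> ring

theorem encard_pathsFromAlong {u : ℤ × ℤ} (hS : ∀ r : ℤ, 0 < r → r • u ∈ S) (hu : u ≠ 0)
    (hk : 0 ≤ k) :
    (pathsFromAlong S u k n).encard =
      (pathsFrom S (k + u.2) (n - u.1)).encard +
        (pathsFromAlong S u (k + u.2) (n - u.1)).encard := by
  have hinj : Function.Injective (List.modifyHead (· + u)) := by
    rintro (_ | ⟨a, p⟩) (_ | ⟨b, q⟩) h <;> simp_all
  have hdisj : Disjoint ((u :: ·) '' pathsFrom S (k + u.2) (n - u.1))
      (List.modifyHead (· + u) '' pathsFromAlong S u (k + u.2) (n - u.1)) := by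
    rw [Set.disjoint_left]
    rintro _ ⟨q, -, rfl⟩ ⟨_, ⟨-, r, hr, t, rfl⟩, h⟩
    simp only [List.modifyHead_cons, List.cons.injEq] at h
    exact (smul_eq_zero.mp (add_eq_right.mp h.1)).elim hr.ne' hu
  rw [pathsFromAlong_eq_union hS hk, Set.encard_union_eq hdisj, List.cons_injective.encard_image,
    hinj.encard_image]

theorem disjoint_pathsFromAlong {u v : ℤ × ℤ} (h : ∀ r s : ℤ, 0 < r → 0 < s → r • u ≠ s • v) :
    Disjoint (pathsFromAlong S u k n) (pathsFromAlong S v k n) := by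
  rw [Set.disjoint_left]
  rintro _ ⟨-, r, hr, t, rfl⟩ ⟨-, s, hs, t', h'⟩
  exact h r s hr hs (List.cons.inj h').1

theorem card_isPath (S : Set (ℤ × ℤ)) (n : ℕ) :
    Nat.card {p // IsPath S n p} = (pathsFrom S 0 (2 * n)).ncard := by
  have : {p | IsPath S n p} = pathsFrom S 0 (2 * n) := by
    ext p
    simp [IsPath, pathsFrom, NeverBelow]
  rw [← this]
  exact Nat.card_coe_set_eq _

end General

theorem finite_lists_of_length_le {α : Type*} {T : Set α} (hT : T.Finite) (m : ℕ) :
    {l : List α | l.length ≤ m ∧ ∀ x ∈ l, x ∈ T}.Finite := by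
  have := hT.to_subtype
  refine ((List.finite_length_le T m).image (List.map Subtype.val)).subset ?_
  rintro l ⟨hl, hlT⟩
  exact ⟨l.pmap Subtype.mk hlT, by simpa using hl, by rw [List.map_pmap]; simp⟩

section S4

variable {k n : ℤ}

theorem smul_mem_S4 {r : ℤ} (hr : 0 < r) :
    r • ((1, 1) : ℤ × ℤ) ∈ S4 ∧ r • ((1, -1) : ℤ × ℤ) ∈ S4 ∧ r • ((2, 0) : ℤ × ℤ) ∈ S4 :=
  ⟨⟨r, hr, by simp⟩, ⟨r, hr, by simp⟩, ⟨r, hr, by simp [mul_comm]⟩⟩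

theorem bounds_of_mem_S4 {a : ℤ × ℤ} (ha : a ∈ S4) : 0 < a.1 ∧ -a.1 ≤ a.2 ∧ a.2 ≤ a.1 := by
  obtain ⟨r, hr, rfl | rfl | rfl⟩ := ha <;> dsimp only <;> omega

theorem bounds_of_mem_pathsFrom_S4 {p : List (ℤ × ℤ)} (hp : p ∈ pathsFrom S4 k n) :
    k ≤ n ∧ p.length ≤ n ∧ ∀ s ∈ p, s.1 ≤ n := by
  induction p generalizing k n with
  | nil => simp_all [nil_mem_pathsFrom]
  | cons a t ih =>
    obtain ⟨ha, -, ht⟩ := cons_mem_pathsFrom.mp hp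
    obtain ⟨hkn, hlen, hfst⟩ := ih ht
    have := bounds_of_mem_S4 ha
    refine ⟨by omega, by simp only [List.length_cons]; omega, ?_⟩
    rintro s (_ | ⟨_, hs⟩)
    · omega
    · linarith [hfst s hs]

theorem pathsFrom_S4_finite (k n : ℤ) : (pathsFrom S4 k n).Finite := by
  refine (finite_lists_of_length_le (Set.finite_Icc ((1 : ℤ), -n) (n, n)) n.toNat).subset ?_
  intro p hp
  obtain ⟨-, hlen, hfst⟩ := bounds_of_mem_pathsFrom_S4 hp
  refine ⟨by omega, fun s hs => ?_⟩
  have := bounds_of_mem_S4 (hp.1 s hs)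
  have := hfst s hs
  simp only [Set.mem_Icc, Prod.le_def]
  omega

theorem pathsFrom_S4_eq_empty (h : n < k) : pathsFrom S4 k n = ∅ :=
  Set.eq_empty_of_forall_notMem fun _ hp => (bounds_of_mem_pathsFrom_S4 hp).1.not_gt h

theorem pathsFromAlong_S4_eq_empty {u : ℤ × ℤ} (h : n < k) : pathsFromAlong S4 u k n = ∅ :=
  Set.subset_empty_iff.mp (pathsFromAlong_subset.trans (pathsFrom_S4_eq_empty h).subset)

theorem pathsFrom_S4_zero_zero : pathsFrom S4 0 0 = {[]} := by
  ext p
  refine ⟨fun hp => ?_, fun hp => (Set.mem_singleton_iff.mp hp) ▸ nil_mem_pathsFrom.mpr ⟨rfl, rfl⟩⟩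
  have := (bounds_of_mem_pathsFrom_S4 hp).2.1
  exact List.length_eq_zero_iff.mp (by omega)

theorem pathsFromAlong_down_zero (n : ℤ) : pathsFromAlong S4 (1, -1) 0 n = ∅ := by
  refine Set.eq_empty_of_forall_notMem ?_
  rintro _ ⟨hp, r, hr, t, rfl⟩
  have := nonneg_of_mem_pathsFrom (smul_cons_mem_pathsFrom.mp hp).2.2
  simp only [zero_add, mul_neg, mul_one, Left.nonneg_neg_iff] at this
  omega

theorem ncard_pathsFromAlong_S4 {u : ℤ × ℤ} (hS : ∀ r : ℤ, 0 < r → r • u ∈ S4) (hu : u ≠ 0)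
    (hk : 0 ≤ k) :
    ((pathsFromAlong S4 u k n).ncard : ℚ) =
      (pathsFrom S4 (k + u.2) (n - u.1)).ncard +
        (pathsFromAlong S4 u (k + u.2) (n - u.1)).ncard := by
  have h := encard_pathsFromAlong (n := n) hS hu hk
  rw [← ((pathsFrom_S4_finite _ _).subset pathsFromAlong_subset).cast_ncard_eq,
    ← (pathsFrom_S4_finite _ _).cast_ncard_eq,
    ← ((pathsFrom_S4_finite _ _).subset pathsFromAlong_subset).cast_ncard_eq] at h
  exact_mod_cast h

theorem pathsFrom_S4_eq_union :
    pathsFrom S4 k n = {p | p = [] ∧ k = 0 ∧ n = 0} ∪ pathsFromAlong S4 (1, 1) k n ∪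
      pathsFromAlong S4 (1, -1) k n ∪ pathsFromAlong S4 (2, 0) k n := by
  ext (_ | ⟨a, t⟩)
  · simp [nil_mem_pathsFrom, pathsFromAlong]
  · constructor
    · intro hp
      obtain ⟨r, hr, rfl | rfl | rfl⟩ := (cons_mem_pathsFrom.mp hp).1
      · exact Or.inl (Or.inl (Or.inr ⟨hp, r, hr, t, by simp⟩))
      · exact Or.inl (Or.inr ⟨hp, r, hr, t, by simp⟩)
      · exact Or.inr ⟨hp, r, hr, t, by simp [mul_comm]⟩
    · rintro (((⟨h, -⟩ | h) | h) | h)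
      · simp at h
      all_goals exact h.1

theorem ncard_pathsFrom_S4 :
    ((pathsFrom S4 k n).ncard : ℚ) = (if k = 0 ∧ n = 0 then 1 else 0) +
      (pathsFromAlong S4 (1, 1) k n).ncard + (pathsFromAlong S4 (1, -1) k n).ncard +
        (pathsFromAlong S4 (2, 0) k n).ncard := by
  have hnil : ({p | p = [] ∧ k = 0 ∧ n = 0} : Set (List (ℤ × ℤ))).encard =
      if k = 0 ∧ n = 0 then 1 else 0 := by
    split_ifs with h <;> simp [h]
  have hnil_disj (u : ℤ × ℤ) :
      Disjoint {p | p = [] ∧ k = 0 ∧ n = 0} (pathsFromAlong S4 u k n) := by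
    rw [Set.disjoint_left]
    rintro _ ⟨rfl, -⟩ ⟨-, r, -, t, h⟩
    exact List.cons_ne_nil _ _ h.symm
  have h := congrArg Set.encard (pathsFrom_S4_eq_union (k := k) (n := n))
  rw [Set.encard_union_eq, Set.encard_union_eq, Set.encard_union_eq, hnil] at h
  · have hfin (u : ℤ × ℤ) := (pathsFrom_S4_finite k n).subset (pathsFromAlong_subset (u := u))
    rw [← (pathsFrom_S4_finite k n).cast_ncard_eq, ← (hfin _).cast_ncard_eq,
      ← (hfin _).cast_ncard_eq, ← (hfin _).cast_ncard_eq] at h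
    split_ifs at h ⊢ <;> exact_mod_cast h
  all_goals try simp only [Set.disjoint_union_left]
  all_goals repeat' apply And.intro
  all_goals first
    | exact hnil_disj _
    | exact disjoint_pathsFromAlong fun r s hr hs h => by simp only [Prod.smul_mk, smul_eq_mul, Prod.ext_iff] at h; omega

end S4

end LatticePath

section FirstStepSystem

variable {R : Type*}

structure FirstStepSystem [Semiring R] (G U D H : ℕ → R⟦X⟧) : Prop where
  total : ∀ k, G k = (if k = 0 then 1 else 0) + U k + D k + H k
  up : ∀ k, U k = X * (G (k + 1) + U (k + 1))
  down_zero : D 0 = 0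
  down_succ : ∀ k, D (k + 1) = G k + D k
  flat : ∀ k, H k = X * (G k + H k)

theorem FirstStepSystem.unique [Semiring R] {G U D H G' U' D' H' : ℕ → R⟦X⟧}
    (h : FirstStepSystem G U D H) (h' : FirstStepSystem G' U' D' H') : G = G' := by
  have hX {n : ℕ} {f f' : R⟦X⟧} (hff : ∀ m < n, coeff m f = coeff m f') :
      coeff n (X * f) = coeff n (X * f') := by
    rcases n with _ | n
    · simp
    · rw [coeff_succ_X_mul, coeff_succ_X_mul, hff n n.lt_succ_self]
  suffices key : ∀ n k, coeff n (G k) = coeff n (G' k) ∧ coeff n (U k) = coeff n (U' k) ∧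
      coeff n (H k) = coeff n (H' k) by
    funext k
    ext n
    exact (key n k).1
  intro n
  induction n using Nat.strong_induction_on with
  | _ n ih =>
  have hU (k : ℕ) : coeff n (U k) = coeff n (U' k) := by
    rw [h.up, h'.up]
    exact hX fun m hm => by rw [map_add, map_add, (ih m hm _).1, (ih m hm _).2.1]
  have hH (k : ℕ) : coeff n (H k) = coeff n (H' k) := by
    rw [h.flat, h'.flat]
    exact hX fun m hm => by rw [map_add, map_add, (ih m hm _).1, (ih m hm _).2.2]
  have hG {k : ℕ} (hD : coeff n (D k) = coeff n (D' k)) : coeff n (G k) = coeff n (G' k) := by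
    rw [h.total, h'.total]
    simp only [map_add, hU, hD, hH]
  -- the down equations do not shift the coefficient, so induct on the height
  have hGD (k : ℕ) : coeff n (G k) = coeff n (G' k) ∧ coeff n (D k) = coeff n (D' k) := by
    induction k with
    | zero =>
      have hD : coeff n (D 0) = coeff n (D' 0) := by rw [h.down_zero, h'.down_zero]
      exact ⟨hG hD, hD⟩
    | succ k ihk =>
      have hD : coeff n (D (k + 1)) = coeff n (D' (k + 1)) := by
        rw [h.down_succ, h'.down_succ, map_add, map_add, ihk.1, ihk.2]
      exact ⟨hG hD, hD⟩
  exact fun k => ⟨(hGD k).1, hU k, hH k⟩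

theorem firstStepSystem_ansatz [CommRing R] {v C F Q : R⟦X⟧} (hzero : C * (2 - F) = 1)
    (hsucc : C * (v - 1) = Q + C + F * (C * (v - 1))) (hup : Q = X * v * (C * (v - 1) + Q))
    (hflat : F = X * (1 + F)) :
    FirstStepSystem (fun k => C * (v - 1) * v ^ k + if k = 0 then C else 0)
      (fun k => Q * v ^ k) (fun k => if k = 0 then 0 else C * v ^ k)
      (fun k => F * (C * (v - 1) * v ^ k + if k = 0 then C else 0)) where
  total k := by
    rcases k with _ | k
    · simp only [pow_zero, mul_one, ↓reduceIte, add_zero]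
      linear_combination hsucc + hzero
    · simp only [Nat.succ_ne_zero, ↓reduceIte, add_zero]
      linear_combination v ^ (k + 1) * hsucc
  up k := by
    simp only [Nat.succ_ne_zero, ↓reduceIte, add_zero, pow_succ]
    linear_combination v ^ k * hup
  down_zero := by simp
  down_succ k := by
    rcases k with _ | k <;> simp only [Nat.succ_ne_zero, ↓reduceIte] <;> ring
  flat k := by
    linear_combination (C * (v - 1) * v ^ k + if k = 0 then C else 0) * hflat

end FirstStepSystem

namespace LatticePath

/-- The coefficient of `X ^ j` counts the paths of horizontal length `2 * j + k`: a path from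
height `k` down to the axis has length at least `k` and of the parity of `k`. -/
noncomputable def countSeries (A : ℤ → ℤ → Set (List (ℤ × ℤ))) (k : ℕ) : ℚ⟦X⟧ :=
  mk fun j => ((A k (2 * j + k)).ncard : ℚ)

theorem firstStepSystem_countSeries :
    FirstStepSystem (countSeries (pathsFrom S4)) (countSeries (pathsFromAlong S4 (1, 1)))
      (countSeries (pathsFromAlong S4 (1, -1))) (countSeries (pathsFromAlong S4 (2, 0))) where
  total k := by
    ext j
    simp only [countSeries, map_add, coeff_mk, ncard_pathsFrom_S4]
    congr 3
    rw [apply_ite (coeff j), coeff_one, map_zero]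
    split_ifs <;> first | rfl | omega
  up k := by
    ext j
    rw [countSeries, coeff_mk, ncard_pathsFromAlong_S4 (fun _ hr => (smul_mem_S4 hr).1)
      (by simp) (by positivity)]
    rcases j with _ | j
    · simp [pathsFrom_S4_eq_empty, pathsFromAlong_S4_eq_empty]
    · simp only [countSeries, coeff_succ_X_mul, map_add, coeff_mk]
      congr 4 <;> push_cast <;> ring
  down_zero := by
    ext j
    simp [countSeries, pathsFromAlong_down_zero]
  down_succ k := by
    ext j
    rw [countSeries, coeff_mk, ncard_pathsFromAlong_S4 (fun _ hr => (smul_mem_S4 hr).2.1)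
      (by simp) (by positivity)]
    simp only [countSeries, map_add, coeff_mk]
    congr 4 <;> push_cast <;> ring
  flat k := by
    ext j
    rw [countSeries, coeff_mk, ncard_pathsFromAlong_S4 (fun _ hr => (smul_mem_S4 hr).2.2)
      (by simp) (by positivity)]
    rcases j with _ | j
    · simp [pathsFrom_S4_eq_empty, pathsFromAlong_S4_eq_empty]
    · simp only [countSeries, coeff_succ_X_mul, map_add, coeff_mk]
      congr 4 <;> push_cast <;> ring

theorem isUnit_of_constantCoeff_ne_zero {K : Type*} [Field K] {φ : K⟦X⟧}
    (h : constantCoeff φ ≠ 0) : IsUnit φ :=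
  isUnit_iff_constantCoeff.mpr (isUnit_iff_ne_zero.mpr h)

theorem exists_kernel_root {s : ℚ⟦X⟧} (hs0 : constantCoeff s = 1) :
    ∃ v, 2 * X * (2 - 3 * X) * v = (1 + X - 4 * X ^ 2) - (1 - X) * s := by
  obtain ⟨w, hw⟩ := X_dvd_iff.mpr (show constantCoeff ((1 + X - 4 * X ^ 2) - (1 - X) * s) = 0 by
    simp [hs0])
  obtain ⟨v, hv⟩ := (isUnit_of_constantCoeff_ne_zero
    (show constantCoeff (2 * (2 - 3 * X) : ℚ⟦X⟧) ≠ 0 by simp [map_ofNat])).dvd (a := w)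
  exact ⟨v, by rw [hw, hv]; ring⟩

theorem kernel_eq_zero {s v : ℚ⟦X⟧} (hs2 : s ^ 2 = 1 - 12 * X + 16 * X ^ 2)
    (hv : 2 * X * (2 - 3 * X) * v = (1 + X - 4 * X ^ 2) - (1 - X) * s) :
    X * (2 - 3 * X) * v ^ 2 - (1 + X - 4 * X ^ 2) * v + (2 - 3 * X) = 0 := by
  have h4 : (4 * X * (2 - 3 * X) : ℚ⟦X⟧) ≠ 0 := by
    refine mul_ne_zero (mul_ne_zero ?_ X_ne_zero) ?_
    all_goals exact fun h => by simpa [map_ofNat] using congrArg constantCoeff h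
  refine (mul_eq_zero.mp ?_).resolve_left h4
  linear_combination (2 * X * (2 - 3 * X) * v - (1 + X - 4 * X ^ 2) - (1 - X) * s) * hv +
    (1 - X) ^ 2 * hs2

theorem exists_firstStepSystem {v : ℚ⟦X⟧}
    (hker : X * (2 - 3 * X) * v ^ 2 - (1 + X - 4 * X ^ 2) * v + (2 - 3 * X) = 0) :
    ∃ G U D H : ℕ → ℚ⟦X⟧, FirstStepSystem G U D H ∧ (2 - 3 * X) * G 0 = (1 - X) * v := by
  have hunit (φ : ℚ⟦X⟧) (hφ : constantCoeff φ = 1) : IsUnit φ :=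
    isUnit_of_constantCoeff_ne_zero (by rw [hφ]; exact one_ne_zero)
  have h1X : IsUnit (1 - X : ℚ⟦X⟧) := hunit _ (by simp)
  have h1Xv : IsUnit (1 - X * v) := hunit _ (by simp)
  obtain ⟨C, hC⟩ : (2 - 3 * X : ℚ⟦X⟧) ∣ 1 - X :=
    (isUnit_of_constantCoeff_ne_zero (by simp [map_ofNat])).dvd
  obtain ⟨F, hF⟩ := h1X.dvd (a := X)
  obtain ⟨Q, hQ⟩ := h1Xv.dvd (a := X * v * (C * (v - 1)))
  refine ⟨_, _, _, _, firstStepSystem_ansatz (v := v) (C := C) (F := F) (Q := Q) ?_ ?_ ?_ ?_,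
    by simp only [pow_zero, ↓reduceIte]; linear_combination (-v) * hC⟩
  · refine mul_right_cancel₀ h1X.ne_zero ?_
    linear_combination C * hF - hC
  · refine mul_right_cancel₀ (mul_ne_zero h1X.ne_zero h1Xv.ne_zero) ?_
    linear_combination (1 - X) * hQ + C * (v - 1) * (1 - X * v) * hF - C * hker
  · linear_combination -hQ
  · linear_combination -hF

end LatticePath

open LatticePath

theorem gf_L_S4 (P s : PowerSeries ℚ)
    (hP : ∀ n : ℕ, PowerSeries.coeff n P =
      if n = 0 then 1
      else (Nat.card {p : List (ℤ × ℤ) // IsPath S4 n p} : ℚ))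
    (hs0 : PowerSeries.constantCoeff s = 1)
    (hs2 : s ^ 2 = 1 - 12 * PowerSeries.X + 16 * PowerSeries.X ^ 2) :
    2 * PowerSeries.X * (2 - 3 * PowerSeries.X) ^ 2 * P = (1 - PowerSeries.X) * (1 + PowerSeries.X - 4 * PowerSeries.X ^ 2) - (1 - PowerSeries.X) ^ 2 * s := by
  obtain ⟨v, hv⟩ := exists_kernel_root hs0
  obtain ⟨G, U, D, H, hsys, hG0⟩ := exists_firstStepSystem (kernel_eq_zero hs2 hv)
  have hPG : P = G 0 := by
    rw [← firstStepSystem_countSeries.unique hsys]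
    ext n
    rw [hP, countSeries, coeff_mk, card_isPath]
    split_ifs with hn
    · simp [hn, pathsFrom_S4_zero_zero]
    · simp
  rw [hPG]
  linear_combination (2 * X * (2 - 3 * X)) * hG0 + (1 - X) * hv
end

section
/- Let P_{S5}(x) = 1 + Σ_{n≥1} |L_{S5}(n)| xⁿ be the formal power series in x over ℚ counting the paths in L_{S5}(n). Then 2x(x−1) · P_{S5}(x) = 2x − 1 + √(1−8x+12x²−4x³), where the square root denotes the unique formal power series with constant term 1 whose square is 1−8x+12x²−4x³. -/
namespace S5Path

open PowerSeries Finset.HasAntidiagonal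

def width (p : List (ℤ × ℤ)) : ℤ := (p.map Prod.fst).sum

def height (p : List (ℤ × ℤ)) : ℤ := (p.map Prod.snd).sum

@[simp] lemma width_nil : width [] = 0 := rfl
@[simp] lemma height_nil : height [] = 0 := rfl
@[simp] lemma width_cons (s : ℤ × ℤ) (p : List (ℤ × ℤ)) :
    width (s :: p) = s.1 + width p := by
  simp [width]
@[simp] lemma height_cons (s : ℤ × ℤ) (p : List (ℤ × ℤ)) :
    height (s :: p) = s.2 + height p := by
  simp [height]
@[simp] lemma width_append (p q : List (ℤ × ℤ)) : width (p ++ q) = width p + width q := by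
  simp [width]
@[simp] lemma height_append (p q : List (ℤ × ℤ)) : height (p ++ q) = height p + height q := by
  simp [height]

def StaysAbove (c : ℤ) (p : List (ℤ × ℤ)) : Prop := ∀ q, q <+: p → c ≤ height q

lemma StaysAbove.nonpos {c : ℤ} {p : List (ℤ × ℤ)} (h : StaysAbove c p) : c ≤ 0 :=
  h [] List.nil_prefix

lemma staysAbove_nil {c : ℤ} : StaysAbove c [] ↔ c ≤ 0 := by
  simp [StaysAbove]

lemma staysAbove_cons {c : ℤ} {s : ℤ × ℤ} {p : List (ℤ × ℤ)} :
    StaysAbove c (s :: p) ↔ c ≤ 0 ∧ StaysAbove (c - s.2) p := by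
  simp only [StaysAbove, List.prefix_cons_iff]
  constructor
  · intro h
    exact ⟨h [] (Or.inl rfl), fun q hq => by
      have := h (s :: q) (Or.inr ⟨q, rfl, hq⟩); simp only [height_cons] at this; omega⟩
  · rintro ⟨hc, h⟩ q (rfl | ⟨q, rfl, hq⟩)
    · exact hc
    · have := h q hq; simp only [height_cons]; omega

lemma staysAbove_append {c : ℤ} {p q : List (ℤ × ℤ)} :
    StaysAbove c (p ++ q) ↔ StaysAbove c p ∧ StaysAbove (c - height p) q := by
  induction p generalizing c with
  | nil =>
    simp only [List.nil_append, height_nil, sub_zero, staysAbove_nil, iff_and_self]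
    exact StaysAbove.nonpos
  | cons s p ih =>
    simp only [List.cons_append, staysAbove_cons, ih, height_cons, sub_sub, and_assoc]

lemma StaysAbove.mono {c c' : ℤ} {p : List (ℤ × ℤ)} (h : StaysAbove c p) (hc : c' ≤ c) :
    StaysAbove c' p :=
  fun q hq => hc.trans (h q hq)

lemma exists_first_descent {c : ℤ} {l : List (ℤ × ℤ)} (hl : ∀ s ∈ l, -1 ≤ s.2) (hc : c ≤ 0)
    (h : height l < c) :
    ∃ q s t, l = q ++ s :: t ∧ StaysAbove c q ∧ height q = c ∧ s.2 = -1 := by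
  induction l generalizing c with
  | nil => simp at h; omega
  | cons a l ih =>
    have ha := hl a List.mem_cons_self
    simp only [height_cons] at h
    by_cases hca : c ≤ a.2
    · obtain ⟨q, s, t, rfl, hq, hqc, hs⟩ :=
        ih (fun s hs => hl s (List.mem_cons_of_mem a hs)) (by omega : c - a.2 ≤ 0) (by omega)
      exact ⟨a :: q, s, t, rfl, staysAbove_cons.mpr ⟨hc, hq⟩, by simp only [height_cons]; omega,
        hs⟩
    · exact ⟨[], a, l, rfl, staysAbove_nil.mpr hc, by simp; omega, by omega⟩

lemma length_le_of_append_cons_eq {q q' t t' : List (ℤ × ℤ)} {s s' : ℤ × ℤ}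
    (hq' : StaysAbove 0 q') (hq : height q = 0) (hs : s.2 = -1)
    (h : q ++ s :: t = q' ++ s' :: t') : q'.length ≤ q.length := by
  by_contra! hlt
  have hpre : q ++ [s] <+: q' :=
    List.prefix_of_prefix_length_le (l₃ := q' ++ s' :: t') (h ▸ ⟨t, by simp⟩)
      (List.prefix_append _ _) (by simp; omega)
  have := hq' _ hpre
  simp [hq, hs] at this

lemma snd_ge_of_mem_S5 {s : ℤ × ℤ} (hs : s ∈ S5) : -1 ≤ s.2 := by
  rcases hs with rfl | rfl | ⟨r, -, rfl⟩ <;> simp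

lemma eq_down_of_mem_S5 {s : ℤ × ℤ} (hs : s ∈ S5) (h : s.2 = -1) : s = (1, -1) := by
  rcases hs with rfl | rfl | ⟨r, -, rfl⟩ <;> simp_all

lemma length_le_width {p : List (ℤ × ℤ)} (hp : ∀ s ∈ p, s ∈ S5) :
    (p.length : ℤ) ≤ width p := by
  induction p with
  | nil => simp
  | cons a p ih =>
    have ha : 1 ≤ a.1 := by
      rcases hp a List.mem_cons_self with rfl | rfl | ⟨r, hr, rfl⟩ <;> simp; omega
    have := ih fun s hs => hp s (List.mem_cons_of_mem a hs)
    simp only [List.length_cons, width_cons]; omega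

/-- Every step of `S5` has `s.1 - s.2 ∈ {0, 2, 4, …}`. -/
lemma exists_width_eq {p : List (ℤ × ℤ)} (hp : ∀ s ∈ p, s ∈ S5) :
    ∃ k : ℕ, width p = 2 * k + height p := by
  induction p with
  | nil => exact ⟨0, by simp⟩
  | cons a p ih =>
    obtain ⟨k, hk⟩ := ih fun s hs => hp s (List.mem_cons_of_mem a hs)
    obtain ⟨m, hm⟩ : ∃ m : ℕ, a.1 = 2 * m + a.2 := by
      rcases hp a List.mem_cons_self with rfl | rfl | ⟨r, hr, rfl⟩
      · exact ⟨0, by simp⟩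
      · exact ⟨1, by simp⟩
      · exact ⟨r.toNat, by simp; omega⟩
    exact ⟨m + k, by simp only [width_cons, height_cons]; push_cast; omega⟩

lemma isPath_iff {n : ℕ} {p : List (ℤ × ℤ)} :
    IsPath S5 n p ↔ (∀ s ∈ p, s ∈ S5) ∧ width p = 2 * n ∧ height p = 0 ∧ StaysAbove 0 p :=
  Iff.rfl

lemma eq_nil_of_isPath_zero {p : List (ℤ × ℤ)} (hp : IsPath S5 0 p) : p = [] := by
  obtain ⟨hS, hw, -, -⟩ := isPath_iff.mp hp
  have := length_le_width hS
  simp only [hw, CharP.cast_eq_zero, mul_zero, Nat.cast_nonpos, List.length_eq_zero_iff] at this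
  exact this

lemma isPath_nil : IsPath S5 0 [] :=
  isPath_iff.mpr ⟨by simp, rfl, rfl, staysAbove_nil.mpr le_rfl⟩

lemma isPath_flat_cons {i j n : ℕ} {t : List (ℤ × ℤ)} (hij : i + j = n) (ht : IsPath S5 j t) :
    IsPath S5 (n + 1) (((2 * (i + 1 : ℕ) : ℤ), 0) :: t) := by
  obtain ⟨hS, hw, hh, ha⟩ := isPath_iff.mp ht
  refine isPath_iff.mpr
    ⟨?_, ?_, by simpa using hh, staysAbove_cons.mpr ⟨le_rfl, by simpa using ha⟩⟩
  · rintro s (_ | ⟨_, hs⟩)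
    · exact Or.inr (Or.inr ⟨i + 1, by omega, rfl⟩)
    · exact hS s hs
  · simp only [width_cons, hw]; push_cast; omega

lemma isPath_up_down {i j n : ℕ} {q t : List (ℤ × ℤ)} (hij : i + j = n) (hq : IsPath S5 i q)
    (ht : IsPath S5 j t) : IsPath S5 (n + 1) ((1, 1) :: (q ++ (1, -1) :: t)) := by
  obtain ⟨hSq, hwq, hhq, haq⟩ := isPath_iff.mp hq
  obtain ⟨hSt, hwt, hht, hat⟩ := isPath_iff.mp ht
  refine isPath_iff.mpr ⟨?_, ?_, ?_, ?_⟩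
  · simp only [List.mem_cons, List.mem_append]
    rintro s (rfl | hs | rfl | hs)
    exacts [Or.inl rfl, hSq s hs, Or.inr (Or.inl rfl), hSt s hs]
  · simp only [width_cons, width_append, hwq, hwt]; push_cast; omega
  · simp [hhq, hht]
  · simp only [staysAbove_cons, staysAbove_append, hhq]
    norm_num
    exact ⟨haq.mono (by norm_num), hat⟩

lemma exists_of_isPath_flat_cons {n : ℕ} {a : ℤ} {t : List (ℤ × ℤ)}
    (h : IsPath S5 (n + 1) ((a, 0) :: t)) :
    ∃ i j, i + j = n ∧ a = 2 * (i + 1 : ℕ) ∧ IsPath S5 j t := by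
  obtain ⟨hS, hw, hh, ha⟩ := isPath_iff.mp h
  obtain ⟨r, hr, hra⟩ : ∃ r : ℤ, 0 < r ∧ a = 2 * r := by
    rcases hS _ List.mem_cons_self with h | h | ⟨r, hr, h⟩ <;> simp at h
    exact ⟨r, hr, h⟩
  have htS : ∀ s ∈ t, s ∈ S5 := fun s hs => hS s (List.mem_cons_of_mem _ hs)
  obtain ⟨j, hj⟩ := exists_width_eq htS
  simp only [width_cons, height_cons, zero_add] at hw hh
  refine ⟨r.toNat - 1, j, by omega, by push_cast; omega, isPath_iff.mpr ⟨htS, by omega, hh, ?_⟩⟩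
  simpa using (staysAbove_cons.mp ha).2

lemma exists_of_isPath_up_cons {n : ℕ} {l : List (ℤ × ℤ)}
    (h : IsPath S5 (n + 1) ((1, 1) :: l)) :
    ∃ i j q t, i + j = n ∧ IsPath S5 i q ∧ IsPath S5 j t ∧ l = q ++ (1, -1) :: t := by
  obtain ⟨hS, hw, hh, ha⟩ := isPath_iff.mp h
  have hlS : ∀ s ∈ l, s ∈ S5 := fun s hs => hS s (List.mem_cons_of_mem _ hs)
  simp only [width_cons, height_cons] at hw hh
  obtain ⟨q, s, t, rfl, hq, hq0, hs⟩ :=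
    exists_first_descent (fun s hs => snd_ge_of_mem_S5 (hlS s hs)) le_rfl
      (by omega : height l < 0)
  obtain rfl := eq_down_of_mem_S5 (hlS s (by simp)) hs
  have hqS : ∀ s ∈ q, s ∈ S5 := fun s hs => hlS s (by simp [hs])
  have htS : ∀ s ∈ t, s ∈ S5 := fun s hs => hlS s (by simp [hs])
  obtain ⟨i, hi⟩ := exists_width_eq hqS
  obtain ⟨j, hj⟩ := exists_width_eq htS
  have ht : StaysAbove 0 t := by
    simp only [staysAbove_cons, staysAbove_append, hq0] at ha
    simpa using ha.2.2.2
  simp only [width_append, width_cons, height_append, height_cons] at hw hh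
  exact ⟨i, j, q, t, by omega, isPath_iff.mpr ⟨hqS, by omega, hq0, hq⟩,
    isPath_iff.mpr ⟨htS, by omega, by omega, ht⟩, rfl⟩

abbrev PathsS5 (n : ℕ) : Type := {p : List (ℤ × ℤ) // IsPath S5 n p}

/-- The two shapes of a path of semilength `n + 1`: a flat step of semilength `i + 1` followed by a
path of semilength `j`, or `U q D t` with `D` the first return to the axis; here `i + j = n`. -/
def PathSplit (n : ℕ) : Type :=
  (Σ ij : antidiagonal n, PathsS5 ij.1.2) ⊕
    (Σ ij : antidiagonal n, PathsS5 ij.1.1 × PathsS5 ij.1.2)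

def PathSplit.join {n : ℕ} : PathSplit n → PathsS5 (n + 1)
  | .inl ⟨ij, t⟩ => ⟨((2 * (ij.1.1 + 1 : ℕ) : ℤ), 0) :: t.1,
      isPath_flat_cons (mem_antidiagonal.mp ij.2) t.2⟩
  | .inr ⟨ij, q, t⟩ => ⟨(1, 1) :: (q.1 ++ (1, -1) :: t.1),
      isPath_up_down (mem_antidiagonal.mp ij.2) q.2 t.2⟩

lemma eq_of_append_down_eq {i i' : ℕ} {q q' t t' : List (ℤ × ℤ)} (hq : IsPath S5 i q)
    (hq' : IsPath S5 i' q') (h : q ++ (1, -1) :: t = q' ++ (1, -1) :: t') : q = q' ∧ t = t' := by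
  obtain ⟨-, -, hq0, hqa⟩ := isPath_iff.mp hq
  obtain ⟨-, -, hq0', hqa'⟩ := isPath_iff.mp hq'
  have hlen := le_antisymm (length_le_of_append_cons_eq hqa hq0' rfl h.symm)
    (length_le_of_append_cons_eq hqa' hq0 rfl h)
  obtain ⟨rfl, htail⟩ := List.append_inj h hlen
  exact ⟨rfl, (List.cons.inj htail).2⟩

lemma PathSplit.join_injective (n : ℕ) : Function.Injective (PathSplit.join (n := n)) := by
  rintro (⟨⟨⟨i, j⟩, hij⟩, t⟩ | ⟨⟨⟨i, j⟩, hij⟩, q, t⟩)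
    (⟨⟨⟨i', j'⟩, hij'⟩, t'⟩ | ⟨⟨⟨i', j'⟩, hij'⟩, q', t'⟩) h <;>
    simp only [join, Subtype.mk.injEq, List.cons.injEq, Prod.mk.injEq, zero_ne_one, one_ne_zero,
      and_false, false_and, true_and] at h
  · have h₁ := mem_antidiagonal.mp hij
    have h₂ := mem_antidiagonal.mp hij'
    obtain rfl : i = i' := by omega
    obtain rfl : j = j' := by omega
    obtain rfl := Subtype.ext h.2
    rfl
  · obtain ⟨hq, ht⟩ := eq_of_append_down_eq q.2 q'.2 h
    have hw : width q.1 = 2 * i := (isPath_iff.mp q.2).2.1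
    have hw' : width q'.1 = 2 * i' := (isPath_iff.mp q'.2).2.1
    obtain rfl : i = i' := by rw [hq, hw'] at hw; omega
    obtain rfl : j = j' := by
      have h₁ := mem_antidiagonal.mp hij
      have h₂ := mem_antidiagonal.mp hij'
      simp only at h₁ h₂
      omega
    obtain rfl := Subtype.ext hq
    obtain rfl := Subtype.ext ht
    rfl

lemma PathSplit.join_surjective (n : ℕ) : Function.Surjective (PathSplit.join (n := n)) := by
  rintro ⟨_ | ⟨a, l⟩, hp⟩
  · have := (isPath_iff.mp hp).2.1
    simp at this
    omega
  rcases (isPath_iff.mp hp).1 a List.mem_cons_self with rfl | rfl | ⟨r, -, rfl⟩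
  · obtain ⟨i, j, q, t, hij, hq, ht, rfl⟩ := exists_of_isPath_up_cons hp
    exact ⟨.inr ⟨⟨(i, j), mem_antidiagonal.mpr hij⟩, ⟨q, hq⟩, ⟨t, ht⟩⟩, rfl⟩
  · have := (staysAbove_cons.mp (isPath_iff.mp hp).2.2.2).2.nonpos
    norm_num at this
  · obtain ⟨i, j, hij, hr, ht⟩ := exists_of_isPath_flat_cons hp
    exact ⟨.inl ⟨⟨(i, j), mem_antidiagonal.mpr hij⟩, ⟨l, ht⟩⟩, by simp [PathSplit.join, hr]⟩

instance finite_pathsS5 (n : ℕ) : Finite (PathsS5 n) := by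
  induction n using Nat.strong_induction_on with
  | _ n ih =>
    cases n with
    | zero =>
      have : Subsingleton (PathsS5 0) :=
        ⟨fun p p' => Subtype.ext
          ((eq_nil_of_isPath_zero p.2).trans (eq_nil_of_isPath_zero p'.2).symm)⟩
      infer_instance
    | succ n =>
      have (ij : antidiagonal n) : Finite (PathsS5 ij.1.1) :=
        ih _ (Nat.lt_succ_of_le (antidiagonal.fst_le ij.2))
      have (ij : antidiagonal n) : Finite (PathsS5 ij.1.2) :=
        ih _ (Nat.lt_succ_of_le (antidiagonal.snd_le ij.2))
      have : Finite (PathSplit n) := by unfold PathSplit; infer_instance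
      exact Finite.of_surjective _ (PathSplit.join_surjective n)

lemma card_pathsS5_zero : Nat.card (PathsS5 0) = 1 :=
  Nat.card_eq_one_iff_exists.mpr
    ⟨⟨[], isPath_nil⟩, fun p => Subtype.ext (eq_nil_of_isPath_zero p.2)⟩

lemma card_pathsS5_succ (n : ℕ) :
    Nat.card (PathsS5 (n + 1)) = ∑ ij ∈ antidiagonal n, Nat.card (PathsS5 ij.2) +
      ∑ ij ∈ antidiagonal n, Nat.card (PathsS5 ij.1) * Nat.card (PathsS5 ij.2) := by
  rw [← Nat.card_congr (Equiv.ofBijective _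
    ⟨PathSplit.join_injective n, PathSplit.join_surjective n⟩), PathSplit, Nat.card_sum,
    Nat.card_sigma, Nat.card_sigma]
  simp only [Nat.card_prod]
  rw [Finset.sum_coe_sort (antidiagonal n) (fun ij => Nat.card (PathsS5 ij.2)),
    Finset.sum_coe_sort (antidiagonal n)
      (fun ij => Nat.card (PathsS5 ij.1) * Nat.card (PathsS5 ij.2))]

noncomputable def pathSeries (R : Type*) [CommSemiring R] : R⟦X⟧ :=
  PowerSeries.mk fun n => (Nat.card (PathsS5 n) : R)

lemma pathSeries_eq (R : Type*) [CommSemiring R] :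
    pathSeries R = 1 + X * (PowerSeries.mk 1 * pathSeries R + pathSeries R ^ 2) := by
  ext (_ | n)
  · simp [pathSeries, card_pathsS5_zero]
  · rw [map_add, coeff_succ_X_mul, map_add, sq, coeff_mul, coeff_mul, coeff_one,
      if_neg n.succ_ne_zero, zero_add]
    simp [pathSeries, card_pathsS5_succ]

lemma pathSeries_completed_sq (R : Type*) [CommRing R] :
    (2 * X * (1 - X) * pathSeries R + (2 * X - 1)) ^ 2 = 1 - 8 * X + 12 * X ^ 2 - 4 * X ^ 3 := by
  have hgeom : PowerSeries.mk 1 * (1 - X) = (1 : R⟦X⟧) := mk_one_mul_one_sub_eq_one R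
  linear_combination (-4 * X * (1 - X) ^ 2) * pathSeries_eq R
    - 4 * X ^ 2 * (1 - X) * pathSeries R * hgeom

end S5Path

open PowerSeries S5Path in
theorem gf_L_S5 (P s : PowerSeries ℚ)
    (hP : ∀ n : ℕ, PowerSeries.coeff n P =
      if n = 0 then 1
      else (Nat.card {p : List (ℤ × ℤ) // IsPath S5 n p} : ℚ))
    (hs0 : PowerSeries.constantCoeff s = 1)
    (hs2 : s ^ 2 = 1 - 8 * PowerSeries.X + 12 * PowerSeries.X ^ 2 - 4 * PowerSeries.X ^ 3) :
    2 * PowerSeries.X * (PowerSeries.X - 1) * P = 2 * PowerSeries.X - 1 + s := by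
  have hPS : P = pathSeries ℚ := by
    ext n
    rw [hP, pathSeries, coeff_mk]
    split_ifs with hn
    · simp [hn, card_pathsS5_zero]
    · rfl
  have hsq : (2 * X * (1 - X) * P + (2 * X - 1)) ^ 2 = s ^ 2 := by
    rw [hs2, hPS, pathSeries_completed_sq]
  rcases sq_eq_sq_iff_eq_or_eq_neg.mp hsq with h | h
  · have := congrArg constantCoeff h
    norm_num [hs0] at this
  · linear_combination -h
end

section
/- Let P_{S6}(x) = 1 + Σ_{n≥1} |L_{S6}(n)| xⁿ be the formal power series in x over ℚ counting the paths in L_{S6}(n). Then 2x(x−2)² · P_{S6}(x) = 1 + 2x − x² − √((1−x)(1−11x+7x²−x³)), where the square root denotes the unique formal power series with constant term 1 whose square is (1−x)(1−11x+7x²−x³). -/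
/-!
Write `P`, `V`, `R`, `W` for the generating functions (in the half-width `n`) of all paths, of
paths starting with an up step, of paths ending with a down step, and of paths doing both, and `U`
for that of the arches (nonempty paths meeting the axis only at their ends) starting with an up
step. The only other arch is the single flat step `(2,0)`, and an arch ends with a down step
exactly when it starts with an up step. Cutting a nonempty path at its first return to the axis
therefore gives
  `P = 1 + (U + x) P`,  `R = (U + x) R + U`,  `V = U P`,  `W = U R + U`.
Lowering an up-arch of size `n + 1` by one unit shortens its first and last steps by one, and
deletes them if they had length one. This identifies up-arches of size `n + 1` with paths of size
`n` together with a choice, at the start if the path starts up and at the end if it ends down, of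
whether that step is the shortened first (last) step of the arch; hence `U = x (P + V + R + W)`.
Eliminating `U, V, R, W` leaves `x (x - 2)² P² - (1 + 2x - x²) P + 1 = 0`, and the constant coefficient of
`1 + 2x - x² - 2x(x - 2)² P` selects the square root with constant term `1`.
-/

namespace S6Path

open PowerSeries Finset.HasAntidiagonal

lemma forall_prefix_append {α : Type*} {l₁ l₂ : List α} {P : List α → Prop} :
    (∀ t, t <+: l₁ ++ l₂ → P t) ↔ (∀ t, t <+: l₁ → P t) ∧ ∀ u, u <+: l₂ → P (l₁ ++ u) := by
  refine ⟨fun h => ⟨fun t ht => h t (ht.trans (List.prefix_append l₁ l₂)),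
    fun u hu => h _ ((List.prefix_append_right_inj l₁).2 hu)⟩, ?_⟩
  rintro ⟨h₁, h₂⟩ t ⟨w, hw⟩
  rcases List.append_eq_append_iff.1 hw with ⟨a, rfl, -⟩ | ⟨c, rfl, rfl⟩
  · exact h₁ t (List.prefix_append t a)
  · exact h₂ c (List.prefix_append c w)

lemma forall_proper_prefix_cons_append {α : Type*} {a e : α} {l : List α} {P : List α → Prop} :
    (∀ t, t <+: a :: (l ++ [e]) → t ≠ [] → t ≠ a :: (l ++ [e]) → P t) ↔
      ∀ u, u <+: l → P (a :: u) := by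
  refine ⟨fun h u hu => h _ (List.cons_prefix_cons.2 ⟨rfl, hu.trans (List.prefix_append l _)⟩)
    (List.cons_ne_nil _ _) fun h' => ?_, fun h t ht h₀ h₁ => ?_⟩
  · have hlen := congrArg List.length h'
    have := hu.length_le
    simp at hlen
    omega
  · rcases List.prefix_cons_iff.1 ht with rfl | ⟨u, rfl, hu⟩
    · exact absurd rfl h₀
    rcases List.prefix_concat_iff.1 hu with rfl | hu
    · exact absurd rfl h₁
    exact h u hu

lemma finite_setOf_lists {α : Type*} {s : Set α} (hs : s.Finite) (N : ℕ) :
    {l : List α | l.length ≤ N ∧ ∀ x ∈ l, x ∈ s}.Finite := by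
  have := hs.to_subtype
  refine ((List.finite_length_le s N).image List.unattach).subset ?_
  rintro l ⟨hl, hs⟩
  exact ⟨l.attachWith (· ∈ s) hs, by simpa using hl, List.unattach_attachWith⟩

lemma card_eq_card_and_add_card_and_not {α : Type*} (P Q : α → Prop) [Finite {a // P a}] :
    Nat.card {a // P a} = Nat.card {a // P a ∧ Q a} + Nat.card {a // P a ∧ ¬Q a} := by
  classical
  have e (R : α → Prop) : {x : {a // P a} // R x.1} ≃ {a // P a ∧ R a} :=
    Equiv.subtypeSubtypeEquivSubtypeInter P R
  have (R : α → Prop) : Finite {a // P a ∧ R a} := Finite.of_equiv _ (e R)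
  rw [← Nat.card_sum]
  exact Nat.card_congr ((Equiv.sumCompl fun x : {a // P a} => Q x.1).symm.trans
    ((e Q).sumCongr (e fun a => ¬Q a)))

def height (p : List (ℤ × ℤ)) : ℤ := (p.map Prod.snd).sum

def width (p : List (ℤ × ℤ)) : ℤ := (p.map Prod.fst).sum

@[simp] lemma height_nil : height [] = 0 := rfl

@[simp] lemma width_nil : width [] = 0 := rfl

@[simp] lemma height_cons (s : ℤ × ℤ) (p : List (ℤ × ℤ)) : height (s :: p) = s.2 + height p := by
  simp [height]

@[simp] lemma width_cons (s : ℤ × ℤ) (p : List (ℤ × ℤ)) : width (s :: p) = s.1 + width p := by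
  simp [width]

@[simp] lemma height_append (p q : List (ℤ × ℤ)) : height (p ++ q) = height p + height q := by
  simp [height]

@[simp] lemma width_append (p q : List (ℤ × ℤ)) : width (p ++ q) = width p + width q := by
  simp [width]

lemma isPath_iff {S : Set (ℤ × ℤ)} {n : ℕ} {p : List (ℤ × ℤ)} :
    IsPath S n p ↔
      (∀ s ∈ p, s ∈ S) ∧ width p = 2 * n ∧ height p = 0 ∧ ∀ t, t <+: p → 0 ≤ height t :=
  Iff.rfl

lemma _root_.IsPath.append {S : Set (ℤ × ℤ)} {i j : ℕ} {q r : List (ℤ × ℤ)}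
    (hq : IsPath S i q) (hr : IsPath S j r) : IsPath S (i + j) (q ++ r) := by
  obtain ⟨hSq, hwq, hhq, hpq⟩ := isPath_iff.1 hq
  obtain ⟨hSr, hwr, hhr, hpr⟩ := isPath_iff.1 hr
  refine isPath_iff.2 ⟨List.forall_mem_append.2 ⟨hSq, hSr⟩, ?_, ?_,
    forall_prefix_append.2 ⟨hpq, fun u hu => ?_⟩⟩
  · simp [hwq, hwr]
    ring
  · simp [hhq, hhr]
  · simpa [hhq] using hpr u hu

lemma _root_.IsPath.size_eq {S : Set (ℤ × ℤ)} {m n : ℕ} {p : List (ℤ × ℤ)}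
    (h : IsPath S m p) (h' : IsPath S n p) : m = n := by
  have := (isPath_iff.1 h).2.1
  have := (isPath_iff.1 h').2.1
  omega

section Steps

variable {s : ℤ × ℤ}

lemma up_mem_S6 {a : ℤ} (ha : 0 < a) : (a, a) ∈ S6 := Or.inl ⟨a, ha, Or.inl rfl⟩

lemma down_mem_S6 {b : ℤ} (hb : 0 < b) : (b, -b) ∈ S6 := Or.inl ⟨b, hb, Or.inr rfl⟩

lemma flat_mem_S6 : ((2, 0) : ℤ × ℤ) ∈ S6 := Or.inr rfl

lemma fst_pos_of_mem_S6 (hs : s ∈ S6) : 0 < s.1 := by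
  rcases hs with ⟨r, hr, rfl | rfl⟩ | rfl <;> simp [hr]

lemma abs_snd_le_fst_of_mem_S6 (hs : s ∈ S6) : |s.2| ≤ s.1 := by
  rcases hs with ⟨r, hr, rfl | rfl⟩ | rfl <;> simp [abs_le] <;> omega

lemma two_dvd_fst_sub_snd_of_mem_S6 (hs : s ∈ S6) : 2 ∣ s.1 - s.2 := by
  rcases hs with ⟨r, hr, rfl | rfl⟩ | rfl <;> dsimp only <;> omega

lemma eq_up_of_mem_S6 (hs : s ∈ S6) (h : 0 < s.2) : s = (s.2, s.2) := by
  rcases hs with ⟨r, hr, rfl | rfl⟩ | rfl <;> grind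

lemma eq_down_of_mem_S6 (hs : s ∈ S6) (h : s.2 < 0) : s = (-s.2, s.2) := by
  rcases hs with ⟨r, hr, rfl | rfl⟩ | rfl <;> grind

lemma eq_flat_of_mem_S6 (hs : s ∈ S6) (h : s.2 = 0) : s = (2, 0) := by
  rcases hs with ⟨r, hr, rfl | rfl⟩ | rfl <;> grind

end Steps

section Paths

variable {n : ℕ} {p q r : List (ℤ × ℤ)}

lemma fst_le_width (hS : ∀ s ∈ p, s ∈ S6) {s : ℤ × ℤ} (hs : s ∈ p) : s.1 ≤ width p :=
  List.single_le_sum (by simpa using fun x hx => (fst_pos_of_mem_S6 (hS x hx)).le) _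
    (List.mem_map_of_mem hs)

lemma length_le_width (hS : ∀ s ∈ p, s ∈ S6) : (p.length : ℤ) ≤ width p := by
  have h := List.card_nsmul_le_sum (p.map Prod.fst) 1 fun x hx => by
    obtain ⟨s, hs, rfl⟩ := List.mem_map.1 hx
    exact fst_pos_of_mem_S6 (hS s hs)
  simpa [width] using h

lemma two_dvd_width_sub_height (hS : ∀ s ∈ p, s ∈ S6) : 2 ∣ width p - height p := by
  induction p with
  | nil => simp
  | cons s p ih =>
    have hs := two_dvd_fst_sub_snd_of_mem_S6 (hS s (by simp))
    have hp := ih fun x hx => hS x (by simp [hx])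
    simp only [width_cons, height_cons]
    omega

lemma exists_isPath (hS : ∀ s ∈ p, s ∈ S6) (hh : height p = 0)
    (hpre : ∀ t, t <+: p → 0 ≤ height t) : ∃ k, IsPath S6 k p := by
  obtain ⟨c, hc⟩ := two_dvd_width_sub_height hS
  have := length_le_width hS
  exact ⟨c.toNat, isPath_iff.2 ⟨hS, by omega, hh, hpre⟩⟩

lemma exists_isPath_of_isPath_append (h : IsPath S6 n (q ++ r)) (hq : height q = 0) :
    ∃ i j, i + j = n ∧ IsPath S6 i q ∧ IsPath S6 j r := by
  obtain ⟨hS, hw, hh, hpre⟩ := isPath_iff.1 h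
  obtain ⟨hSq, hSr⟩ := List.forall_mem_append.1 hS
  obtain ⟨hpq, hpr⟩ := forall_prefix_append.1 hpre
  obtain ⟨i, hi⟩ := exists_isPath hSq hq hpq
  obtain ⟨j, hj⟩ := exists_isPath hSr (by simpa [hq] using hh) (by simpa [hq] using hpr)
  have hwi := (isPath_iff.1 hi).2.1
  have hwj := (isPath_iff.1 hj).2.1
  rw [width_append] at hw
  exact ⟨i, j, by omega, hi, hj⟩

lemma isPath_zero_iff : IsPath S6 0 p ↔ p = [] := by
  refine ⟨fun h => ?_, fun h => isPath_iff.2 ⟨by simp [h], by simp [h], by simp [h], by simp [h]⟩⟩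
  obtain ⟨hS, hw, -, -⟩ := isPath_iff.1 h
  have := length_le_width hS
  rw [← List.length_eq_zero_iff]
  omega

lemma card_isPath_zero : Nat.card {p // IsPath S6 0 p} = 1 :=
  Nat.card_eq_one_iff_exists.2
    ⟨⟨[], isPath_zero_iff.2 rfl⟩, fun p => Subtype.ext (isPath_zero_iff.1 p.2)⟩

lemma finite_isPath (n : ℕ) : {p | IsPath S6 n p}.Finite := by
  refine (finite_setOf_lists ((Set.finite_Icc (0 : ℤ) (2 * n)).prod
    (Set.finite_Icc (-(2 * n : ℤ)) (2 * n))) (2 * n)).subset fun p hp => ?_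
  obtain ⟨hS, hw, -, -⟩ := isPath_iff.1 hp
  refine ⟨by have := length_le_width hS; omega, fun s hs => ?_⟩
  have h₁ := fst_pos_of_mem_S6 (hS s hs)
  have h₂ := abs_le.1 (abs_snd_le_fst_of_mem_S6 (hS s hs))
  have h₃ := fst_le_width hS hs
  simp only [Set.mem_prod, Set.mem_Icc]
  omega

lemma finite_of_isPath {Q : List (ℤ × ℤ) → Prop} (h : ∀ p, Q p → IsPath S6 n p) :
    Finite {p // Q p} :=
  ((finite_isPath n).subset h).to_subtype

end Paths

noncomputable def gf (Q : ℕ → List (ℤ × ℤ) → Prop) : PowerSeries ℚ :=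
  PowerSeries.mk fun n => (Nat.card {p // Q n p} : ℚ)

@[simp] lemma coeff_gf (Q : ℕ → List (ℤ × ℤ) → Prop) (n : ℕ) :
    coeff n (gf Q) = Nat.card {p // Q n p} :=
  coeff_mk _ _

theorem gf_isPath : gf (fun n p => IsPath S6 n p) = 1 + gf (fun n p => IsPath S6 n p ∧ p ≠ []) := by
  ext n
  rcases n with _ | n
  · have : IsEmpty {p // IsPath S6 0 p ∧ p ≠ []} := ⟨fun p => p.2.2 (isPath_zero_iff.1 p.2.1)⟩
    rw [map_add, coeff_gf, coeff_gf, coeff_one, if_pos rfl, card_isPath_zero, Nat.card_of_isEmpty]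
    simp
  · have hne (p : List (ℤ × ℤ)) (hp : IsPath S6 (n + 1) p) : p ≠ [] := by
      rintro rfl
      exact n.succ_ne_zero (hp.size_eq (isPath_zero_iff.2 rfl))
    rw [map_add, coeff_gf, coeff_gf, coeff_one, if_neg n.succ_ne_zero, zero_add]
    exact congrArg _ (Nat.card_congr (Equiv.subtypeEquivRight fun p =>
      ⟨fun hp => ⟨hp, hne p hp⟩, And.left⟩))

structure IsArch (n : ℕ) (q : List (ℤ × ℤ)) : Prop where
  isPath : IsPath S6 n q
  ne_nil : q ≠ []
  height_pos : ∀ t, t <+: q → t ≠ [] → t ≠ q → 0 < height t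

section Arches

variable {i j n : ℕ} {p q r : List (ℤ × ℤ)}

lemma isArch_iff : IsArch n q ↔ (∀ s ∈ q, s ∈ S6) ∧ width q = 2 * n ∧ height q = 0 ∧ q ≠ [] ∧
    ∀ t, t <+: q → t ≠ [] → t ≠ q → 0 < height t := by
  refine ⟨fun ⟨hp, hne, hpos⟩ => ?_, fun ⟨hS, hw, hh, hne, hpos⟩ => ⟨?_, hne, hpos⟩⟩
  · obtain ⟨hS, hw, hh, -⟩ := isPath_iff.1 hp
    exact ⟨hS, hw, hh, hne, hpos⟩
  refine isPath_iff.2 ⟨hS, hw, hh, fun t ht => ?_⟩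
  rcases eq_or_ne t [] with rfl | h₀
  · simp
  rcases eq_or_ne t q with rfl | h₁
  · exact hh.ge
  exact (hpos t ht h₀ h₁).le

lemma isArch_flat : IsArch 1 [(2, 0)] :=
  isArch_iff.2 ⟨by simp [flat_mem_S6], by simp, by simp, List.cons_ne_nil _ _,
    by simp [List.prefix_cons_iff]⟩

lemma IsArch.pos (hq : IsArch n q) : 0 < n := by
  obtain ⟨hS, hw, -, -⟩ := isPath_iff.1 hq.isPath
  have := length_le_width hS
  have := List.length_pos_iff.2 hq.ne_nil
  omega

lemma IsArch.eq_of_prefix (hq : IsArch n q) {t : List (ℤ × ℤ)} (ht : t <+: q) (hne : t ≠ [])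
    (h0 : height t = 0) : t = q := by
  by_contra h
  exact (hq.height_pos t ht hne h).ne' h0

lemma IsArch.append_inj {q' r' : List (ℤ × ℤ)} (hq : IsArch i q) (hq' : IsArch j q')
    (h : q ++ r = q' ++ r') : q = q' ∧ r = r' := by
  obtain rfl : q = q' := by
    rcases List.prefix_or_prefix_of_prefix (List.prefix_append q r)
      (h ▸ List.prefix_append q' r') with h' | h'
    · exact hq'.eq_of_prefix h' hq.ne_nil (isPath_iff.1 hq.isPath).2.2.1
    · exact (hq.eq_of_prefix h' hq'.ne_nil (isPath_iff.1 hq'.isPath).2.2.1).symm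
  exact ⟨rfl, List.append_cancel_left h⟩

lemma _root_.IsPath.exists_isArch_append (h : IsPath S6 n p) (hp : p ≠ []) :
    ∃ i j q r, i + j = n ∧ IsArch i q ∧ IsPath S6 j r ∧ p = q ++ r := by
  classical
  obtain ⟨-, -, hh, hpre⟩ := isPath_iff.1 h
  have hex : ∃ m, 0 < m ∧ height (p.take m) = 0 :=
    ⟨p.length, List.length_pos_iff.2 hp, by simpa using hh⟩
  obtain ⟨hm, hm0⟩ := Nat.find_spec hex
  set m := Nat.find hex
  obtain ⟨i, j, hij, hi, hj⟩ :=
    exists_isPath_of_isPath_append ((List.take_append_drop m p).symm ▸ h) hm0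
  refine ⟨i, j, _, _, hij, ⟨hi, by simp [hm.ne', hp], fun t ht hne hneq => ?_⟩, hj,
    (List.take_append_drop m p).symm⟩
  have htp : t <+: p := ht.trans (List.take_prefix m p)
  have hlt : t.length < m := by
    have := ht.length_le
    have : t.length ≠ (p.take m).length := fun heq => hneq (ht.eq_of_length heq)
    have : (p.take m).length ≤ m := List.length_take_le m p
    omega
  have hne0 : height t ≠ 0 := by
    rw [List.prefix_iff_eq_take.1 htp]
    exact fun h0 => Nat.find_min hex hlt ⟨List.length_pos_iff.2 hne, h0⟩
  exact lt_of_le_of_ne (hpre t htp) hne0.symm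

end Arches

section FirstReturn

variable {S L : List (ℤ × ℤ) → Prop} (hS : ∀ q r, q ≠ [] → (S (q ++ r) ↔ S q))
  (hL : ∀ q r, r ≠ [] → (L (q ++ r) ↔ L r)) (n : ℕ)

def joinFirstReturn :
    (Σ x : antidiagonal n, {q // IsArch x.1.1 q ∧ S q} × {r // IsPath S6 x.1.2 r ∧ L r ∧ r ≠ []}) ⊕
      {q // IsArch n q ∧ S q ∧ L q} → {p // IsPath S6 n p ∧ S p ∧ L p ∧ p ≠ []} :=
  Sum.elim
    (fun ⟨x, q, r⟩ => ⟨q.1 ++ r.1,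
      by simpa [mem_antidiagonal.1 x.2] using q.2.1.isPath.append r.2.1,
      (hS _ _ q.2.1.ne_nil).2 q.2.2, (hL _ _ r.2.2.2).2 r.2.2.1, by simp [q.2.1.ne_nil]⟩)
    fun q => ⟨q.1, q.2.1.isPath, q.2.2.1, q.2.2.2, q.2.1.ne_nil⟩

lemma joinFirstReturn_injective : Function.Injective (joinFirstReturn hS hL n) := by
  rintro (⟨⟨⟨i, j⟩, hij⟩, ⟨q, hq, _⟩, ⟨r, hr, _, hr0⟩⟩ | ⟨q, hq, _⟩)
    (⟨⟨⟨i', j'⟩, hij'⟩, ⟨q', hq', _⟩, ⟨r', hr', _, hr0'⟩⟩ | ⟨q', hq', _⟩) h <;>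
    simp only [joinFirstReturn, Sum.elim_inl, Sum.elim_inr, Subtype.mk.injEq] at h
  · obtain ⟨rfl, rfl⟩ := hq.append_inj hq' h
    obtain rfl := hq.isPath.size_eq hq'.isPath
    obtain rfl := hr.size_eq hr'
    rfl
  · exact (hr0 (hq.append_inj hq' (h.trans (List.append_nil q').symm)).2).elim
  · exact (hr0' (hq'.append_inj hq (h.symm.trans (List.append_nil q).symm)).2).elim
  · subst h
    rfl

lemma joinFirstReturn_surjective : Function.Surjective (joinFirstReturn hS hL n) := by
  rintro ⟨p, hp, hSp, hLp, hp0⟩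
  obtain ⟨i, j, q, r, hij, hq, hr, rfl⟩ := IsPath.exists_isArch_append hp hp0
  by_cases hr0 : r = []
  · subst hr0
    obtain rfl : j = 0 := hr.size_eq (isPath_zero_iff.2 rfl)
    simp only [List.append_nil, add_zero] at hSp hLp hij ⊢
    subst hij
    exact ⟨Sum.inr ⟨q, hq, hSp, hLp⟩, rfl⟩
  · exact ⟨Sum.inl ⟨⟨(i, j), mem_antidiagonal.2 hij⟩, ⟨q, hq, (hS q r hq.ne_nil).1 hSp⟩,
      ⟨r, hr, (hL q r hr0).1 hLp, hr0⟩⟩, rfl⟩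

end FirstReturn

theorem card_firstReturn {S L : List (ℤ × ℤ) → Prop}
    (hS : ∀ q r, q ≠ [] → (S (q ++ r) ↔ S q)) (hL : ∀ q r, r ≠ [] → (L (q ++ r) ↔ L r))
    (n : ℕ) :
    Nat.card {p // IsPath S6 n p ∧ S p ∧ L p ∧ p ≠ []} =
      ∑ x ∈ antidiagonal n, Nat.card {q // IsArch x.1 q ∧ S q} *
          Nat.card {r // IsPath S6 x.2 r ∧ L r ∧ r ≠ []} +
        Nat.card {q // IsArch n q ∧ S q ∧ L q} := by
  have (i : ℕ) : Finite {q // IsArch i q ∧ S q} := finite_of_isPath fun q hq => hq.1.isPath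
  have (j : ℕ) : Finite {r // IsPath S6 j r ∧ L r ∧ r ≠ []} := finite_of_isPath fun r hr => hr.1
  have : Finite {q // IsArch n q ∧ S q ∧ L q} := finite_of_isPath fun q hq => hq.1.isPath
  rw [← Nat.card_eq_of_bijective _
      ⟨joinFirstReturn_injective hS hL n, joinFirstReturn_surjective hS hL n⟩,
    Nat.card_sum, Nat.card_sigma]
  simp only [Nat.card_prod]
  rw [Finset.sum_coe_sort (antidiagonal n)
    fun x => Nat.card {q // IsArch x.1 q ∧ S q} * Nat.card {r // IsPath S6 x.2 r ∧ L r ∧ r ≠ []}]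

theorem gf_firstReturn {S L : List (ℤ × ℤ) → Prop}
    (hS : ∀ q r, q ≠ [] → (S (q ++ r) ↔ S q)) (hL : ∀ q r, r ≠ [] → (L (q ++ r) ↔ L r)) :
    gf (fun n p => IsPath S6 n p ∧ S p ∧ L p ∧ p ≠ []) =
      gf (fun n q => IsArch n q ∧ S q) * gf (fun n r => IsPath S6 n r ∧ L r ∧ r ≠ []) +
        gf (fun n q => IsArch n q ∧ S q ∧ L q) := by
  ext n
  simp [coeff_mul, card_firstReturn hS hL n]

def StartsUp (p : List (ℤ × ℤ)) : Prop := ∃ s ∈ p.head?, 0 < s.2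

def EndsDown (p : List (ℤ × ℤ)) : Prop := ∃ s ∈ p.getLast?, s.2 < 0

section Ends

variable {n : ℕ} {s : ℤ × ℤ} {p q r : List (ℤ × ℤ)}

@[simp] lemma startsUp_cons : StartsUp (s :: p) ↔ 0 < s.2 := by simp [StartsUp]

@[simp] lemma endsDown_concat : EndsDown (p ++ [s]) ↔ s.2 < 0 := by simp [EndsDown]

lemma StartsUp.ne_nil (h : StartsUp p) : p ≠ [] := by
  rintro rfl
  simp [StartsUp] at h

lemma EndsDown.ne_nil (h : EndsDown p) : p ≠ [] := by
  rintro rfl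
  simp [EndsDown] at h

lemma startsUp_append (hq : q ≠ []) : StartsUp (q ++ r) ↔ StartsUp q := by
  simp [StartsUp, List.head?_append_of_ne_nil _ hq]

lemma endsDown_append (hr : r ≠ []) : EndsDown (q ++ r) ↔ EndsDown r := by
  simp [EndsDown, List.getLast?_append_of_ne_nil _ hr]

lemma IsArch.eq_flat_of_not_startsUp (hq : IsArch n q) (h : ¬StartsUp q) :
    n = 1 ∧ q = [(2, 0)] := by
  obtain ⟨hS, hw, -, hpre⟩ := isPath_iff.1 hq.isPath
  obtain ⟨s, t, rfl⟩ := List.exists_cons_of_ne_nil hq.ne_nil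
  have hs0 : s.2 = 0 := by
    have := hpre [s] (by simp)
    simp only [startsUp_cons, not_lt] at h
    simp at this
    omega
  obtain rfl : s = (2, 0) := eq_flat_of_mem_S6 (hS s (by simp)) hs0
  obtain rfl : t = [] := by
    simpa using hq.eq_of_prefix (t := [(2, 0)]) (by simp) (by simp) (by simp)
  simp at hw
  exact ⟨by omega, rfl⟩

lemma IsArch.endsDown_of_startsUp (hq : IsArch n q) (h : StartsUp q) : EndsDown q := by
  obtain ⟨-, -, hh, hpre⟩ := isPath_iff.1 hq.isPath
  obtain ⟨t, e, rfl⟩ : ∃ t e, q = t ++ [e] := by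
    rcases List.eq_nil_or_concat q with h' | ⟨t, e, h'⟩
    · exact absurd h' hq.ne_nil
    · exact ⟨t, e, by simpa using h'⟩
  have ht := hpre t (List.prefix_append t [e])
  simp only [height_append, height_cons, height_nil, add_zero] at hh
  refine endsDown_concat.2 (lt_of_le_of_ne (by omega) fun he => ?_)
  have hte : t ≠ [] := by
    rintro rfl
    simp [he] at h
  simpa using hq.eq_of_prefix (List.prefix_append t [e]) hte (by omega)

lemma IsArch.endsDown_iff (hq : IsArch n q) : EndsDown q ↔ StartsUp q := by
  refine ⟨fun h => ?_, hq.endsDown_of_startsUp⟩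
  by_contra hsu
  rw [(hq.eq_flat_of_not_startsUp hsu).2] at h
  simpa using endsDown_concat (p := []) |>.1 h

lemma isArch_and_endsDown_iff : IsArch n q ∧ EndsDown q ↔ IsArch n q ∧ StartsUp q :=
  and_congr_right IsArch.endsDown_iff

lemma isArch_and_startsUp_and_endsDown_iff :
    IsArch n q ∧ StartsUp q ∧ EndsDown q ↔ IsArch n q ∧ StartsUp q :=
  and_congr_right fun hq => and_iff_left_of_imp hq.endsDown_of_startsUp

end Ends

theorem gf_isArch : gf (fun n q => IsArch n q) = gf (fun n q => IsArch n q ∧ StartsUp q) + X := by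
  ext n
  have : Finite {q // IsArch n q} := finite_of_isPath fun q hq => hq.isPath
  rw [coeff_gf, map_add, coeff_gf, coeff_X, card_eq_card_and_add_card_and_not _ StartsUp]
  push_cast
  congr 1
  split_ifs with hn
  · subst hn
    have : Nat.card {q // IsArch 1 q ∧ ¬StartsUp q} = 1 :=
      Nat.card_eq_one_iff_exists.2 ⟨⟨[(2, 0)], isArch_flat, by simp⟩,
        fun q => Subtype.ext (q.2.1.eq_flat_of_not_startsUp q.2.2).2⟩
    simp [this]
  · have : IsEmpty {q // IsArch n q ∧ ¬StartsUp q} :=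
      ⟨fun q => hn (q.2.1.eq_flat_of_not_startsUp q.2.2).1⟩
    simp

def upStep (a : ℤ) : List (ℤ × ℤ) := if a = 0 then [] else [(a, a)]

def downStep (b : ℤ) : List (ℤ × ℤ) := if b = 0 then [] else [(b, -b)]

/-- `raise a m b` is `lower a m b` lifted by one unit, with its first and last steps lengthened
by one. -/
def raise (a : ℤ) (m : List (ℤ × ℤ)) (b : ℤ) : List (ℤ × ℤ) :=
  (a + 1, a + 1) :: (m ++ [(b + 1, -(b + 1))])

def lower (a : ℤ) (m : List (ℤ × ℤ)) (b : ℤ) : List (ℤ × ℤ) := upStep a ++ m ++ downStep b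

section Peel

variable {n : ℕ} {a b : ℤ} {m p : List (ℤ × ℤ)}

@[simp] lemma height_upStep (a : ℤ) : height (upStep a) = a := by
  unfold upStep; split_ifs <;> simp [*]

@[simp] lemma width_upStep (a : ℤ) : width (upStep a) = a := by
  unfold upStep; split_ifs <;> simp [*]

@[simp] lemma height_downStep (b : ℤ) : height (downStep b) = -b := by
  unfold downStep; split_ifs <;> simp [*]

@[simp] lemma width_downStep (b : ℤ) : width (downStep b) = b := by
  unfold downStep; split_ifs <;> simp [*]

lemma mem_S6_of_mem_upStep (ha : 0 ≤ a) {s : ℤ × ℤ} (hs : s ∈ upStep a) : s ∈ S6 := by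
  unfold upStep at hs
  split_ifs at hs
  · simp at hs
  · exact List.mem_singleton.1 hs ▸ up_mem_S6 (by omega)

lemma mem_S6_of_mem_downStep (hb : 0 ≤ b) {s : ℤ × ℤ} (hs : s ∈ downStep b) : s ∈ S6 := by
  unfold downStep at hs
  split_ifs at hs
  · simp at hs
  · exact List.mem_singleton.1 hs ▸ down_mem_S6 (by omega)

lemma height_nonneg_of_prefix_upStep (ha : 0 ≤ a) {t : List (ℤ × ℤ)} (ht : t <+: upStep a) :
    0 ≤ height t := by
  unfold upStep at ht; split_ifs at ht <;> simp_all [List.prefix_cons_iff]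
  rcases ht with rfl | rfl <;> simp [ha]

lemma neg_le_height_of_prefix_downStep (hb : 0 ≤ b) {t : List (ℤ × ℤ)} (ht : t <+: downStep b) :
    -b ≤ height t := by
  unfold downStep at ht; split_ifs at ht <;> simp_all [List.prefix_cons_iff]
  rcases ht with rfl | rfl <;> simp [hb]

lemma isPath_lower_iff (ha : 0 ≤ a) (hb : 0 ≤ b) :
    IsPath S6 n (lower a m b) ↔ (∀ s ∈ m, s ∈ S6) ∧ a + width m + b = 2 * n ∧
      a + height m = b ∧ ∀ t, t <+: m → 0 ≤ a + height t := by
  rw [isPath_iff, lower, List.append_assoc, forall_prefix_append, forall_prefix_append]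
  simp only [List.forall_mem_append, height_append, width_append, height_upStep, width_upStep,
    height_downStep, width_downStep]
  constructor
  · rintro ⟨⟨-, hS, -⟩, hw, hh, -, hpre, -⟩
    exact ⟨hS, by omega, by omega, hpre⟩
  · rintro ⟨hS, hw, hh, hpre⟩
    refine ⟨⟨fun s => mem_S6_of_mem_upStep ha, hS, fun s => mem_S6_of_mem_downStep hb⟩,
      by omega, by omega, fun t => height_nonneg_of_prefix_upStep ha, hpre, fun t ht => ?_⟩
    have := neg_le_height_of_prefix_downStep hb ht
    have := hpre m (List.prefix_refl m)
    omega

lemma isArch_raise_iff (ha : 0 ≤ a) (hb : 0 ≤ b) :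
    IsArch (n + 1) (raise a m b) ↔ (∀ s ∈ m, s ∈ S6) ∧ a + width m + b = 2 * n ∧
      a + height m = b ∧ ∀ t, t <+: m → 0 ≤ a + height t := by
  rw [isArch_iff, raise, forall_proper_prefix_cons_append]
  simp only [List.forall_mem_cons, List.forall_mem_append, List.not_mem_nil, IsEmpty.forall_iff,
    implies_true, and_true, width_cons, width_append, height_cons, height_append, width_nil,
    height_nil]
  constructor
  · rintro ⟨⟨-, hS, -⟩, hw, hh, -, hpos⟩
    exact ⟨hS, by push_cast at hw; omega, by omega, fun t ht => by have := hpos t ht; omega⟩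
  · rintro ⟨hS, hw, hh, hpre⟩
    exact ⟨⟨up_mem_S6 (by omega), hS, down_mem_S6 (by omega)⟩, by push_cast; omega, by omega,
      List.cons_ne_nil _ _, fun t ht => by have := hpre t ht; omega⟩

lemma isArch_raise_iff_isPath_lower (ha : 0 ≤ a) (hb : 0 ≤ b) :
    IsArch (n + 1) (raise a m b) ↔ IsPath S6 n (lower a m b) :=
  (isArch_raise_iff ha hb).trans (isPath_lower_iff ha hb).symm

lemma raise_inj {a' b' : ℤ} {m' : List (ℤ × ℤ)} (h : raise a m b = raise a' m' b') :
    a = a' ∧ m = m' ∧ b = b' := by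
  simp only [raise, List.cons.injEq, Prod.mk.injEq] at h
  obtain ⟨⟨ha, -⟩, h⟩ := h
  obtain ⟨hm, h⟩ := List.append_inj' h rfl
  simp only [List.cons.injEq, Prod.mk.injEq, add_left_inj] at h
  exact ⟨by simpa using ha, hm, h.1.1⟩

lemma IsArch.exists_eq_raise {q : List (ℤ × ℤ)} (hq : IsArch n q) (h : StartsUp q) :
    ∃ a m b, 0 ≤ a ∧ 0 ≤ b ∧ q = raise a m b := by
  obtain ⟨hS, -, hh, -⟩ := isPath_iff.1 hq.isPath
  obtain ⟨s, t, rfl⟩ := List.exists_cons_of_ne_nil hq.ne_nil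
  have hs : 0 < s.2 := startsUp_cons.1 h
  have ht : t ≠ [] := by
    rintro rfl
    simp at hh
    omega
  obtain ⟨e, he, he0⟩ := (endsDown_append (q := [s]) ht).1 (hq.endsDown_of_startsUp h)
  obtain ⟨m, rfl⟩ := List.getLast?_eq_some_iff.1 he
  refine ⟨s.2 - 1, m, -e.2 - 1, by omega, by omega, ?_⟩
  rw [raise, eq_up_of_mem_S6 (hS s (by simp)) hs, eq_down_of_mem_S6 (hS e (by simp)) he0]
  simp

lemma upStep_append_inj {a' : ℤ} {l l' : List (ℤ × ℤ)} (h : a ≠ 0 ↔ a' ≠ 0)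
    (h' : upStep a ++ l = upStep a' ++ l') : a = a' ∧ l = l' := by
  unfold upStep at h'
  by_cases ha : a = 0 <;> by_cases ha' : a' = 0 <;> simp_all

lemma append_downStep_inj {b' : ℤ} {l l' : List (ℤ × ℤ)} (h : b ≠ 0 ↔ b' ≠ 0)
    (h' : l ++ downStep b = l' ++ downStep b') : l = l' ∧ b = b' := by
  unfold downStep at h'
  by_cases hb : b = 0 <;> by_cases hb' : b' = 0 <;> simp_all

lemma exists_upStep_append (hS : ∀ s ∈ p, s ∈ S6) (i : Bool) (h : i → StartsUp p) :
    ∃ a l, 0 ≤ a ∧ (a ≠ 0 ↔ i) ∧ p = upStep a ++ l := by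
  cases i
  · exact ⟨0, p, le_rfl, by simp, by simp [upStep]⟩
  obtain ⟨s, l, rfl⟩ := List.exists_cons_of_ne_nil (h rfl).ne_nil
  have hs := startsUp_cons.1 (h rfl)
  refine ⟨s.2, l, hs.le, by simp [hs.ne'], ?_⟩
  rw [upStep, if_neg hs.ne', ← eq_up_of_mem_S6 (hS s (by simp)) hs]
  rfl

lemma exists_append_downStep (hS : ∀ s ∈ p, s ∈ S6) (j : Bool) (h : j → EndsDown p) :
    ∃ l b, 0 ≤ b ∧ (b ≠ 0 ↔ j) ∧ p = l ++ downStep b := by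
  cases j
  · exact ⟨p, 0, le_rfl, by simp, by simp [downStep]⟩
  obtain ⟨s, hs, hs0⟩ := h rfl
  obtain ⟨l, rfl⟩ := List.getLast?_eq_some_iff.1 hs
  refine ⟨l, -s.2, by omega, by simp [hs0.ne], ?_⟩
  rw [downStep, if_neg (by omega), neg_neg, ← eq_down_of_mem_S6 (hS s (by simp)) hs0]

lemma EndsDown.of_upStep_append {l : List (ℤ × ℤ)} (ha : 0 ≤ a) (h : EndsDown (upStep a ++ l)) :
    EndsDown l := by
  rcases eq_or_ne l [] with rfl | hl
  · unfold upStep at h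
    split_ifs at h
    · simpa using h
    · have := endsDown_concat (p := []) |>.1 h
      simp at this
      omega
  · exact (endsDown_append hl).1 h

/-- The flag `c.1` records whether the first step of the arch `raise a m b` is longer than one
unit, i.e. survives in `lower a m b` as its first, upward, step; likewise `c.2` for the last
step. -/
def PeelData (n : ℕ) (c : Bool × Bool) : Set (ℤ × List (ℤ × ℤ) × ℤ) :=
  {x | 0 ≤ x.1 ∧ 0 ≤ x.2.2 ∧ IsPath S6 n (lower x.1 x.2.1 x.2.2) ∧
    (x.1 ≠ 0 ↔ c.1) ∧ (x.2.2 ≠ 0 ↔ c.2)}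

lemma bijOn_lower (c : Bool × Bool) :
    Set.BijOn (fun x => lower x.1 x.2.1 x.2.2) (PeelData n c)
      {p | IsPath S6 n p ∧ (c.1 → StartsUp p) ∧ (c.2 → EndsDown p)} := by
  refine ⟨?_, ?_, ?_⟩
  · rintro ⟨a, m, b⟩ ⟨ha, hb, hp, hi, hj⟩
    dsimp only at ha hb hi hj ⊢
    refine ⟨hp, fun h => ?_, fun h => ?_⟩
    · have ha0 : a ≠ 0 := hi.2 h
      simp [lower, upStep, ha0]
      omega
    · show EndsDown (upStep a ++ m ++ downStep b)
      have hb0 : b ≠ 0 := hj.2 h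
      rw [downStep, if_neg hb0, endsDown_concat]
      simp only [Left.neg_neg_iff]
      omega
  · rintro ⟨a, m, b⟩ ⟨-, -, -, hi, hj⟩ ⟨a', m', b'⟩ ⟨-, -, -, hi', hj'⟩ h
    dsimp only [lower] at h hi hj hi' hj'
    rw [List.append_assoc, List.append_assoc] at h
    obtain ⟨rfl, hmb⟩ := upStep_append_inj (hi.trans hi'.symm) h
    obtain ⟨rfl, rfl⟩ := append_downStep_inj (hj.trans hj'.symm) hmb
    rfl
  · rintro p ⟨hp, hi, hj⟩
    have hS := (isPath_iff.1 hp).1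
    obtain ⟨a, l, ha, hai, rfl⟩ := exists_upStep_append hS c.1 hi
    obtain ⟨m, b, hb, hbj, rfl⟩ := exists_append_downStep (List.forall_mem_append.1 hS).2 c.2
      fun h => (hj h).of_upStep_append ha
    exact ⟨(a, m, b), ⟨ha, hb, by simpa [lower] using hp, hai, hbj⟩, by simp [lower]⟩

theorem card_isArch_succ_startsUp (n : ℕ) :
    Nat.card {q // IsArch (n + 1) q ∧ StartsUp q} =
      ∑ c : Bool × Bool,
        Nat.card {p // IsPath S6 n p ∧ (c.1 → StartsUp p) ∧ (c.2 → EndsDown p)} := by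
  have hequiv (c : Bool × Bool) := (bijOn_lower (n := n) c).equiv _
  have (c : Bool × Bool) : Finite (PeelData n c) :=
    (hequiv c).finite_iff.2 (finite_of_isPath fun p hp => hp.1)
  have hcard (c : Bool × Bool) : Nat.card (PeelData n c) =
      Nat.card {p // IsPath S6 n p ∧ (c.1 → StartsUp p) ∧ (c.2 → EndsDown p)} :=
    Nat.card_congr (hequiv c)
  simp_rw [← hcard]
  rw [← Nat.card_sigma]
  refine (Nat.card_eq_of_bijective (fun x => ⟨raise x.2.1.1 x.2.1.2.1 x.2.1.2.2,
    (isArch_raise_iff_isPath_lower x.2.2.1 x.2.2.2.1).2 x.2.2.2.2.1,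
    by simp [raise]; linarith [x.2.2.1]⟩) ⟨?_, ?_⟩).symm
  · rintro ⟨⟨i, j⟩, ⟨⟨a, m, b⟩, _, _, _, hi, hj⟩⟩ ⟨⟨i', j'⟩, ⟨⟨a', m', b'⟩, _, _, _, hi', hj'⟩⟩ h
    simp only [Subtype.mk.injEq] at h
    obtain ⟨rfl, rfl, rfl⟩ := raise_inj h
    obtain rfl : i = i' := Bool.eq_iff_iff.2 (hi.symm.trans hi')
    obtain rfl : j = j' := Bool.eq_iff_iff.2 (hj.symm.trans hj')
    rfl
  · rintro ⟨q, hq, hsu⟩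
    obtain ⟨a, m, b, ha, hb, rfl⟩ := hq.exists_eq_raise hsu
    exact ⟨⟨(decide (a ≠ 0), decide (b ≠ 0)),
      ⟨(a, m, b), ha, hb, (isArch_raise_iff_isPath_lower ha hb).1 hq, by simp, by simp⟩⟩, rfl⟩

end Peel

theorem gf_isArch_startsUp :
    gf (fun n q => IsArch n q ∧ StartsUp q) =
      X * ∑ c : Bool × Bool,
        gf (fun n p => IsPath S6 n p ∧ (c.1 → StartsUp p) ∧ (c.2 → EndsDown p)) := by
  ext n
  rcases n with _ | n
  · have : IsEmpty {q // IsArch 0 q ∧ StartsUp q} := ⟨fun q => q.2.1.pos.false⟩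
    simp
  · rw [coeff_gf, coeff_succ_X_mul, map_sum, card_isArch_succ_startsUp]
    simp

lemma quadratic_of_firstReturn {A : Type*} [CommRing A] {X P E U V R W : A}
    (hP : P = 1 + E) (hE : E = (U + X) * E + (U + X)) (hR : R = (U + X) * R + U)
    (hV : V = U * E + U) (hW : W = U * R + U) (hU : U = X * (P + V + R + W)) :
    X * (X - 2) ^ 2 * P ^ 2 - (1 + 2 * X - X ^ 2) * P + 1 = 0 := by
  have h₁ : P = 1 + (U + X) * P := by linear_combination hE + (1 - U - X) * hP
  have h₃ : V = U * P := by linear_combination hV - U * hP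
  linear_combination
    (-(X * P ^ 2 * (1 + U)) + (-1 + P * U + 3 * X * P - X ^ 2 * P)) * h₁
      + (-(X * P ^ 2 * (1 + U))) * hR + (-(X * P ^ 2 * (1 - X - U))) * h₃
      + (-(X * P ^ 2 * (1 - X - U))) * hW + (-(P ^ 2 * (1 - X - U))) * hU

theorem gf_isPath_quadratic :
    X * (X - 2) ^ 2 * gf (fun n p => IsPath S6 n p) ^ 2 -
      (1 + 2 * X - X ^ 2) * gf (fun n p => IsPath S6 n p) + 1 = 0 := by
  have hE := gf_firstReturn (S := fun _ => True) (L := fun _ => True) (by simp) (by simp)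
  have hR := gf_firstReturn (S := fun _ => True) (by simp) fun q r hr => endsDown_append (q := q) hr
  have hV := gf_firstReturn (L := fun _ => True) (fun q r hq => startsUp_append (r := r) hq)
    (by simp)
  have hW := gf_firstReturn (fun q r hq => startsUp_append (r := r) hq)
    fun q r hr => endsDown_append (q := q) hr
  have hU := gf_isArch_startsUp
  simp only [true_and, and_true, and_iff_left_of_imp StartsUp.ne_nil,
    and_iff_left_of_imp EndsDown.ne_nil, isArch_and_endsDown_iff,
    isArch_and_startsUp_and_endsDown_iff, gf_isArch] at hE hR hV hW
  simp only [Fintype.sum_prod_type, Fintype.sum_bool, true_implies, Bool.false_eq_true,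
    false_implies, true_and, and_true] at hU
  exact quadratic_of_firstReturn gf_isPath hE hR hV hW (by rw [hU]; ring)

end S6Path

open S6Path PowerSeries in
theorem gf_L_S6 (P s : PowerSeries ℚ)
    (hP : ∀ n : ℕ, PowerSeries.coeff n P =
      if n = 0 then 1
      else (Nat.card {p : List (ℤ × ℤ) // IsPath S6 n p} : ℚ))
    (hs0 : PowerSeries.constantCoeff s = 1)
    (hs2 : s ^ 2 = (1 - PowerSeries.X) * (1 - 11 * PowerSeries.X + 7 * PowerSeries.X ^ 2 - PowerSeries.X ^ 3)) :
    2 * PowerSeries.X * (PowerSeries.X - 2) ^ 2 * P = 1 + 2 * PowerSeries.X - PowerSeries.X ^ 2 - s := by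
  obtain rfl : P = gf fun n p => IsPath S6 n p := by
    ext n
    rw [hP, coeff_gf]
    split_ifs with hn
    · simp [hn, card_isPath_zero]
    · rfl
  have hsq :
      (1 + 2 * X - X ^ 2 - 2 * X * (X - 2) ^ 2 * gf fun n p => IsPath S6 n p) ^ 2 = s ^ 2 := by
    linear_combination 4 * X * (X - 2) ^ 2 * gf_isPath_quadratic - hs2
  rcases sq_eq_sq_iff_eq_or_eq_neg.1 hsq with h | h
  · linear_combination -h
  · have h0 := congrArg constantCoeff h
    norm_num [hs0] at h0
end
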